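/- Let M be a Hölder continuous function on Σ_A taking values in the set of d×d matrices with all entries positive, fix q ∈ ℝ, and let p ≥ 1 be such that A^p has all entries positive. Then there exists a constant C ≥ 1 such that for every n ≥ 1, every ℓ > p and every I ∈ Σ_{A,n}: C^{−1} s_n(I,q) s_ℓ(q) ≤ Σ_{J∈Σ_{A,ℓ}: IJ∈Σ_{A,n+ℓ}} s_{n+ℓ}(IJ,q) ≤ C s_n(I,q) s_ℓ(q), and likewise C^{−1} s_n(I,q) s_ℓ(q) ≤ Σ_{J∈Σ_{A,ℓ}: JI∈Σ_{A,n+ℓ}} s_{n+ℓ}(JI,q) ≤ C s_n(I,q) s_ℓ(q). -/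

import Mathlib

open Filter MeasureTheory
open scoped Classical BigOperators Topology ENNReal

/-- The left shift on `Σ = {1,…,m}^ℕ`, modelled as `ℕ → Fin m`. -/
def shift {m : ℕ} (x : ℕ → Fin m) : ℕ → Fin m := fun k => x (k + 1)

/-- The subshift of finite type `Σ_A` determined by a 0-1 matrix `A`. -/
def SigmaA {m : ℕ} (A : Matrix (Fin m) (Fin m) ℕ) : Set (ℕ → Fin m) :=
  {x | ∀ k : ℕ, A (x k) (x (k + 1)) = 1}

/-- Admissibility of a word `J ∈ Σ_{A,n}` (a word of length `n` over `{1,…,m}`). -/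
def Adm {m : ℕ} (A : Matrix (Fin m) (Fin m) ℕ) {n : ℕ} (J : Fin n → Fin m) : Prop :=
  ∀ (i : ℕ) (h : i + 1 < n), A (J ⟨i, Nat.lt_of_succ_lt h⟩) (J ⟨i + 1, h⟩) = 1

/-- The (finite) set `Σ_{A,n}` of admissible words of length `n`. -/
noncomputable def admWords {m : ℕ} (A : Matrix (Fin m) (Fin m) ℕ) (n : ℕ) :
    Finset (Fin n → Fin m) :=
  Finset.univ.filter fun J => Adm A J

/-- The cylinder set `[J] ⊆ Σ_A` of a word `J`. -/
def cylinder {m : ℕ} (A : Matrix (Fin m) (Fin m) ℕ) {n : ℕ} (J : Fin n → Fin m) :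
    Set (ℕ → Fin m) :=
  {x | x ∈ SigmaA A ∧ ∀ i : Fin n, x (i : ℕ) = J i}

/-- `‖B‖ = 1ᵗ B 1`, the sum of all entries of `B`. -/
def matNorm {d : ℕ} (B : Matrix (Fin d) (Fin d) ℝ) : ℝ := ∑ i, ∑ j, B i j

/-- The product `M(x) M(σx) ⋯ M(σ^{n-1}x)`. -/
noncomputable def Mprod {m d : ℕ} (M : (ℕ → Fin m) → Matrix (Fin d) (Fin d) ℝ)
    (x : ℕ → Fin m) (n : ℕ) : Matrix (Fin d) (Fin d) ℝ :=
  (((List.range n).map fun i => M (shift^[i] x))).prod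

/-- `s_n(J,q) = sup_{x ∈ [J]} ‖M(x)⋯M(σ^{n-1}x)‖^q`. -/
noncomputable def sWord {m d : ℕ} (A : Matrix (Fin m) (Fin m) ℕ)
    (M : (ℕ → Fin m) → Matrix (Fin d) (Fin d) ℝ) (q : ℝ) {n : ℕ} (J : Fin n → Fin m) : ℝ :=
  sSup ((fun x => matNorm (Mprod M x n) ^ q) '' cylinder A J)

/-- `s_n(q) = Σ_{J ∈ Σ_{A,n}} s_n(J,q)`. -/
noncomputable def sSum {m d : ℕ} (A : Matrix (Fin m) (Fin m) ℕ)
    (M : (ℕ → Fin m) → Matrix (Fin d) (Fin d) ℝ) (q : ℝ) (n : ℕ) : ℝ :=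
  ∑ J ∈ admWords A n, sWord A M q J

/-- `M` is Hölder continuous on `Σ_A` with respect to the metric `d(x,y) = m^{-n(x,y)}`:
entrywise, `|M(x)_{ij} - M(y)_{ij}| ≤ C (m^{-α})^n` whenever `x, y` agree on the first
`n` coordinates. -/
def HolderM {m d : ℕ} (A : Matrix (Fin m) (Fin m) ℕ)
    (M : (ℕ → Fin m) → Matrix (Fin d) (Fin d) ℝ) : Prop :=
  ∃ C > (0:ℝ), ∃ a : ℝ, 0 < a ∧ a < 1 ∧
    ∀ x ∈ SigmaA A, ∀ y ∈ SigmaA A, ∀ n : ℕ, (∀ k < n, x k = y k) →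
      ∀ i j, |M x i j - M y i j| ≤ C * a ^ n

/-- `A` is a 0-1 matrix. -/
def ZeroOne {m : ℕ} (A : Matrix (Fin m) (Fin m) ℕ) : Prop :=
  ∀ i j, A i j = 0 ∨ A i j = 1

/-- `A` is primitive: some power of `A` has all entries positive. -/
def Primitive {m : ℕ} (A : Matrix (Fin m) (Fin m) ℕ) : Prop :=
  ∃ p : ℕ, 1 ≤ p ∧ ∀ i j, 0 < (A ^ p) i j

/-- `M` takes values in the positive `d × d` matrices (on `Σ_A`). -/
def PosM {m d : ℕ} (A : Matrix (Fin m) (Fin m) ℕ)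
    (M : (ℕ → Fin m) → Matrix (Fin d) (Fin d) ℝ) : Prop :=
  ∀ x ∈ SigmaA A, ∀ i j, 0 < M x i j

-- basic lemmas
lemma shift_iterate_apply {m : ℕ} (x : ℕ → Fin m) (a k : ℕ) : shift^[a] x k = x (k + a) := by
  induction a generalizing x k with
  | zero => rfl
  | succ a ih =>
    rw [Function.iterate_succ_apply, ih]
    rfl

lemma shift_mem_sigmaA {m : ℕ} {A : Matrix (Fin m) (Fin m) ℕ} {x : ℕ → Fin m}
    (hx : x ∈ SigmaA A) (a : ℕ) : shift^[a] x ∈ SigmaA A := by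
  intro k
  rw [shift_iterate_apply, shift_iterate_apply]
  have := hx (k + a)
  convert this using 3
  ring

lemma Mprod_zero {m d : ℕ} (M : (ℕ → Fin m) → Matrix (Fin d) (Fin d) ℝ) (x : ℕ → Fin m) :
    Mprod M x 0 = 1 := by simp [Mprod]

lemma Mprod_add {m d : ℕ} (M : (ℕ → Fin m) → Matrix (Fin d) (Fin d) ℝ) (x : ℕ → Fin m)
    (a b : ℕ) : Mprod M x (a + b) = Mprod M x a * Mprod M (shift^[a] x) b := by
  unfold Mprod
  rw [List.range_add, List.map_append, List.prod_append]
  congr 1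
  rw [List.map_map]
  congr 1
  apply List.map_congr_left
  intro i _
  simp only [Function.comp_apply]
  rw [add_comm a i, Function.iterate_add_apply]

lemma Mprod_succ_left {m d : ℕ} (M : (ℕ → Fin m) → Matrix (Fin d) (Fin d) ℝ) (x : ℕ → Fin m)
    (n : ℕ) : Mprod M x (n + 1) = M x * Mprod M (shift x) n := by
  have := Mprod_add M x 1 n
  rw [add_comm 1 n] at this
  rw [this]
  unfold Mprod
  have : List.range 1 = [0] := rfl
  rw [this]
  simp

-- paths from positive powers
lemma path_of_pow_pos {m : ℕ} {A : Matrix (Fin m) (Fin m) ℕ} (hA01 : ∀ i j, A i j = 0 ∨ A i j = 1)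
    {r : ℕ} {i j : Fin m} (h : 0 < (A ^ r) i j) :
    ∃ u : ℕ → Fin m, u 0 = i ∧ u r = j ∧ ∀ t < r, A (u t) (u (t + 1)) = 1 := by
  induction r generalizing j with
  | zero =>
    have : i = j := by
      by_contra hij
      simp [pow_zero, Matrix.one_apply, hij] at h
    exact ⟨fun _ => i, rfl, this ▸ rfl, by simp⟩
  | succ r ih =>
    rw [pow_succ, Matrix.mul_apply] at h
    have : ∃ k, 0 < (A ^ r) i k * A k j := by
      by_contra hc
      push_neg at hc
      simp only [Nat.le_zero] at hc
      have : ∑ k, (A ^ r) i k * A k j = 0 := Finset.sum_eq_zero fun k _ => hc k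
      omega
    obtain ⟨k, hk⟩ := this
    have h1 : 0 < (A ^ r) i k := by
      rcases Nat.eq_zero_or_pos ((A ^ r) i k) with h0 | h0
      · rw [h0] at hk; simp at hk
      · exact h0
    have h2 : 0 < A k j := by
      rcases Nat.eq_zero_or_pos (A k j) with h0 | h0
      · rw [h0] at hk; simp at hk
      · exact h0
    obtain ⟨u, hu0, hur, hue⟩ := ih h1
    refine ⟨fun t => if t ≤ r then u t else j, by simpa using hu0, by simp, ?_⟩
    intro t ht
    rcases Nat.lt_or_ge t r with h | h
    · simpa only [Nat.le_of_lt h, Nat.succ_le_of_lt h, if_pos] using hue t h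
    · have heq : t = r := Nat.le_antisymm (Nat.lt_succ_iff.mp ht) h
      subst heq
      have e1 : (if t ≤ t then u t else j) = u t := if_pos le_rfl
      have e2 : (if t + 1 ≤ t then u (t + 1) else j) = j := if_neg (by omega)
      show A (if t ≤ t then u t else j) (if t + 1 ≤ t then u (t + 1) else j) = 1
      rw [e1, e2, hur]
      rcases hA01 k j with h0 | h0
      · omega
      · exact h0


section Extend
variable {m : ℕ} {A : Matrix (Fin m) (Fin m) ℕ}

lemma succ_exists (hA01 : ∀ i j, A i j = 0 ∨ A i j = 1) {p : ℕ} (hp : 1 ≤ p)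
    (hAp : ∀ i j, 0 < (A ^ p) i j) (i : Fin m) : ∃ j, A i j = 1 := by
  have hm : 0 < m := Fin.pos i
  obtain ⟨u, hu0, -, hue⟩ := path_of_pow_pos hA01 (hAp i ⟨0, hm⟩)
  exact ⟨u 1, hu0 ▸ hue 0 hp⟩

/-- A choice of successor. -/
noncomputable def nxt (hA01 : ∀ i j, A i j = 0 ∨ A i j = 1) {p : ℕ} (hp : 1 ≤ p)
    (hAp : ∀ i j, 0 < (A ^ p) i j) (i : Fin m) : Fin m :=
  Classical.choose (succ_exists hA01 hp hAp i)

lemma nxt_spec (hA01 : ∀ i j, A i j = 0 ∨ A i j = 1) {p : ℕ} (hp : 1 ≤ p)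
    (hAp : ∀ i j, 0 < (A ^ p) i j) (i : Fin m) : A i (nxt hA01 hp hAp i) = 1 :=
  Classical.choose_spec (succ_exists hA01 hp hAp i)

/-- Every admissible word of positive length has a point in its cylinder. -/
lemma cylinder_nonempty (hA01 : ∀ i j, A i j = 0 ∨ A i j = 1) {p : ℕ} (hp : 1 ≤ p)
    (hAp : ∀ i j, 0 < (A ^ p) i j) {n : ℕ} (hn : 1 ≤ n) {I : Fin n → Fin m} (hI : Adm A I) :
    (cylinder A I).Nonempty := by
  set g := nxt hA01 hp hAp with hg
  set L : Fin m := I ⟨n - 1, by omega⟩ with hL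
  refine ⟨fun k => if h : k < n then I ⟨k, h⟩ else g^[k + 1 - n] L, ?_, ?_⟩
  · intro k
    rcases Nat.lt_or_ge (k + 1) n with h | h
    · have hk : k < n := Nat.lt_of_succ_lt h
      simp only [dif_pos hk, dif_pos h]
      exact hI k h
    · rcases Nat.lt_or_ge k n with hk | hk
      · have hkn : k = n - 1 := by omega
        have h1 : ¬ (k + 1 < n) := by omega
        simp only [dif_pos hk, dif_neg h1]
        have : k + 1 + 1 - n = 1 := by omega
        rw [this]
        have : I ⟨k, hk⟩ = L := by
          rw [hL]; congr 1; apply Fin.ext; simp; omega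
        rw [this]
        exact nxt_spec hA01 hp hAp L
      · have h1 : ¬ (k < n) := by omega
        have h2 : ¬ (k + 1 < n) := by omega
        simp only [dif_neg h1, dif_neg h2]
        have : k + 1 + 1 - n = (k + 1 - n) + 1 := by omega
        rw [this, Function.iterate_succ_apply']
        exact nxt_spec hA01 hp hAp _
  · intro i
    simp [i.isLt]

lemma A_pow_succ_pos (hA01 : ∀ i j, A i j = 0 ∨ A i j = 1) {p : ℕ} (hp : 1 ≤ p)
    (hAp : ∀ i j, 0 < (A ^ p) i j) (i j : Fin m) : 0 < (A ^ (p + 1)) i j := by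
  obtain ⟨k, hk⟩ := succ_exists hA01 hp hAp i
  have : (A ^ (p + 1)) i j = ∑ l, A i l * (A ^ p) l j := by
    rw [pow_succ'] ; rw [Matrix.mul_apply]
  rw [this]
  have hterm : 0 < A i k * (A ^ p) k j := by
    rw [hk]; simpa using hAp k j
  calc 0 < A i k * (A ^ p) k j := hterm
    _ ≤ ∑ l, A i l * (A ^ p) l j :=
      Finset.single_le_sum (f := fun l => A i l * (A ^ p) l j)
        (fun l _ => Nat.zero_le _) (Finset.mem_univ k)

/-- Points of a cylinder: membership facts. -/
lemma mem_cylinder_iff {n : ℕ} (I : Fin n → Fin m) (x : ℕ → Fin m) :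
    x ∈ cylinder A I ↔ x ∈ SigmaA A ∧ ∀ i : Fin n, x (i : ℕ) = I i := Iff.rfl

end Extend

section Compactness
variable {m d : ℕ} {A : Matrix (Fin m) (Fin m) ℕ}
  {M : (ℕ → Fin m) → Matrix (Fin d) (Fin d) ℝ}

lemma isClosed_sigmaA : IsClosed (SigmaA A) := by
  have h : SigmaA A = ⋂ k, {x : ℕ → Fin m | A (x k) (x (k + 1)) = 1} := by
    ext x; simp [SigmaA, Set.mem_iInter]
  rw [h]
  refine isClosed_iInter fun k => ?_
  have h2 : {x : ℕ → Fin m | A (x k) (x (k + 1)) = 1} =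
      (fun x : ℕ → Fin m => (x k, x (k + 1))) ⁻¹' {p : Fin m × Fin m | A p.1 p.2 = 1} := rfl
  rw [h2]
  exact (isClosed_discrete _).preimage ((continuous_apply k).prodMk (continuous_apply (k + 1)))

lemma agree_nhds (x : ℕ → Fin m) (n : ℕ) :
    {y : ℕ → Fin m | ∀ k < n, y k = x k} ∈ nhds x := by
  have h : {y : ℕ → Fin m | ∀ k < n, y k = x k} =
      ⋂ k ∈ Finset.range n, (fun y : ℕ → Fin m => y k) ⁻¹' {x k} := by
    ext y; simp [Set.mem_iInter]
  rw [h]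
  refine (Filter.biInter_finset_mem _).mpr fun k _ => ?_
  exact (continuous_apply k).continuousAt.preimage_mem_nhds (by simp)

lemma continuousOn_entry (hH : HolderM A M) (i j : Fin d) :
    ContinuousOn (fun x => M x i j) (SigmaA A) := by
  obtain ⟨C, hC, a, ha0, ha1, hH⟩ := hH
  intro x hx
  rw [ContinuousWithinAt, Metric.tendsto_nhds]
  intro ε hε
  obtain ⟨n, hn⟩ : ∃ n : ℕ, C * a ^ n < ε := by
    have h0 : Filter.Tendsto (fun n : ℕ => C * a ^ n) Filter.atTop (nhds (C * 0)) :=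
      (tendsto_pow_atTop_nhds_zero_of_lt_one ha0.le ha1).const_mul C
    rw [mul_zero] at h0
    exact ((h0.eventually (gt_mem_nhds hε)).exists)
  have hmem : {y : ℕ → Fin m | ∀ k < n, y k = x k} ∈ nhdsWithin x (SigmaA A) :=
    nhdsWithin_le_nhds (agree_nhds x n)
  filter_upwards [hmem, self_mem_nhdsWithin] with y hy hyA
  rw [Real.dist_eq]
  exact lt_of_le_of_lt (hH y hyA x hx n hy i j) hn

lemma exists_entry_bounds (hd : 1 ≤ d) (hm : 0 < m) (hH : HolderM A M) (hpos : PosM A M)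
    (hSne : (SigmaA A).Nonempty) :
    ∃ δ K : ℝ, 0 < δ ∧ δ ≤ K ∧
      ∀ x ∈ SigmaA A, ∀ i j, δ ≤ M x i j ∧ M x i j ≤ K := by
  have hcpt : IsCompact (SigmaA A) := isClosed_sigmaA.isCompact
  have hne : Nonempty (Fin d × Fin d) := ⟨(⟨0, hd⟩, ⟨0, hd⟩)⟩
  have hmin : ∀ p : Fin d × Fin d, ∃ xp ∈ SigmaA A, ∀ y ∈ SigmaA A,
      M xp p.1 p.2 ≤ M y p.1 p.2 := fun p => by
    obtain ⟨x, hx, hmin⟩ := hcpt.exists_isMinOn hSne (continuousOn_entry hH p.1 p.2)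
    exact ⟨x, hx, fun y hy => hmin hy⟩
  have hmax : ∀ p : Fin d × Fin d, ∃ xp ∈ SigmaA A, ∀ y ∈ SigmaA A,
      M y p.1 p.2 ≤ M xp p.1 p.2 := fun p => by
    obtain ⟨x, hx, hmax⟩ := hcpt.exists_isMaxOn hSne (continuousOn_entry hH p.1 p.2)
    exact ⟨x, hx, fun y hy => hmax hy⟩
  choose xlo hxlo hlo using hmin
  choose xhi hxhi hhi using hmax
  have hne' : (Finset.univ : Finset (Fin d × Fin d)).Nonempty := Finset.univ_nonempty
  refine ⟨Finset.univ.inf' hne' (fun p => M (xlo p) p.1 p.2),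
      Finset.univ.sup' hne' (fun p => M (xhi p) p.1 p.2), ?_, ?_, ?_⟩
  · rw [Finset.lt_inf'_iff]
    exact fun p _ => hpos _ (hxlo p) p.1 p.2
  · obtain ⟨x0, hx0⟩ := hSne
    obtain ⟨p⟩ := hne
    calc Finset.univ.inf' hne' (fun p => M (xlo p) p.1 p.2) ≤ M (xlo p) p.1 p.2 :=
          Finset.inf'_le _ (Finset.mem_univ p)
      _ ≤ M x0 p.1 p.2 := hlo p x0 hx0
      _ ≤ M (xhi p) p.1 p.2 := hhi p x0 hx0
      _ ≤ Finset.univ.sup' hne' (fun p => M (xhi p) p.1 p.2) :=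
          Finset.le_sup' (fun p : Fin d × Fin d => M (xhi p) p.1 p.2) (Finset.mem_univ p)
  · intro x hx i j
    constructor
    · calc Finset.univ.inf' hne' (fun p => M (xlo p) p.1 p.2) ≤ M (xlo (i, j)) i j :=
            Finset.inf'_le _ (Finset.mem_univ (i, j))
        _ ≤ M x i j := hlo (i, j) x hx
    · calc M x i j ≤ M (xhi (i, j)) i j := hhi (i, j) x hx
        _ ≤ Finset.univ.sup' hne' (fun p => M (xhi p) p.1 p.2) :=
            Finset.le_sup' (fun p : Fin d × Fin d => M (xhi p) p.1 p.2) (Finset.mem_univ (i, j))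

end Compactness

section MatrixEst
variable {m d : ℕ} {A : Matrix (Fin m) (Fin m) ℕ}
  {M : (ℕ → Fin m) → Matrix (Fin d) (Fin d) ℝ} {δ K : ℝ}

lemma Mprod_one' (M : (ℕ → Fin m) → Matrix (Fin d) (Fin d) ℝ) (x : ℕ → Fin m) :
    Mprod M x 1 = M x := by
  have := Mprod_succ_left M x 0
  rw [this, Mprod_zero, mul_one]

lemma Mprod_succ_right (M : (ℕ → Fin m) → Matrix (Fin d) (Fin d) ℝ) (x : ℕ → Fin m) (n : ℕ) :
    Mprod M x (n + 1) = Mprod M x n * M (shift^[n] x) := by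
  rw [Mprod_add M x n 1, Mprod_one']

lemma Mprod_entry_nonneg (hδ : 0 < δ)
    (hbd : ∀ x ∈ SigmaA A, ∀ i j, δ ≤ M x i j ∧ M x i j ≤ K)
    {x : ℕ → Fin m} (hx : x ∈ SigmaA A) (r : ℕ) (i j : Fin d) :
    0 ≤ Mprod M x r i j := by
  induction r generalizing x i j with
  | zero => rw [Mprod_zero]; rcases eq_or_ne i j with h | h <;> simp [Matrix.one_apply, h]
  | succ r ih =>
    rw [Mprod_succ_left, Matrix.mul_apply]
    refine Finset.sum_nonneg fun k _ => mul_nonneg ?_ (ih (shift_mem_sigmaA hx 1) k j)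
    exact (hδ.trans_le (hbd x hx i k).1).le

lemma Mprod_entry_bounds (hδ : 0 < δ) (hδK : δ ≤ K)
    (hbd : ∀ x ∈ SigmaA A, ∀ i j, δ ≤ M x i j ∧ M x i j ≤ K)
    {x : ℕ → Fin m} (hx : x ∈ SigmaA A) (r : ℕ) (i j : Fin d) :
    δ * ((d : ℝ) * δ) ^ r ≤ Mprod M x (r + 1) i j ∧
      Mprod M x (r + 1) i j ≤ K * ((d : ℝ) * K) ^ r := by
  induction r generalizing x i j with
  | zero => simpa [Mprod_one'] using hbd x hx i j
  | succ r ih =>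
    have hsh : shift x ∈ SigmaA A := shift_mem_sigmaA hx 1
    rw [show r + 1 + 1 = (r + 1) + 1 from rfl, Mprod_succ_left, Matrix.mul_apply]
    constructor
    · calc δ * ((d : ℝ) * δ) ^ (r + 1) = ∑ _k : Fin d, δ * (δ * ((d : ℝ) * δ) ^ r) := by
            rw [Finset.sum_const, Finset.card_univ, Fintype.card_fin, nsmul_eq_mul]; ring
        _ ≤ ∑ k, M x i k * Mprod M (shift x) (r + 1) k j := by
            refine Finset.sum_le_sum fun k _ => mul_le_mul (hbd x hx i k).1
              (ih hsh k j).1 (by positivity) ?_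
            exact le_trans (by positivity) (hbd x hx i k).1
    · calc ∑ k, M x i k * Mprod M (shift x) (r + 1) k j
          ≤ ∑ _k : Fin d, K * (K * ((d : ℝ) * K) ^ r) := by
            refine Finset.sum_le_sum fun k _ => mul_le_mul (hbd x hx i k).2 (ih hsh k j).2
              (Mprod_entry_nonneg hδ hbd hsh (r + 1) k j) (le_trans hδ.le hδK)
        _ = K * ((d : ℝ) * K) ^ (r + 1) := by
            rw [Finset.sum_const, Finset.card_univ, Fintype.card_fin, nsmul_eq_mul]; ring

/-- Row ratio: entries in the same column are comparable. -/
lemma Mprod_row_ratio (hδ : 0 < δ)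
    (hbd : ∀ x ∈ SigmaA A, ∀ i j, δ ≤ M x i j ∧ M x i j ≤ K)
    {x : ℕ → Fin m} (hx : x ∈ SigmaA A) (r : ℕ) (i i' j : Fin d) :
    Mprod M x (r + 1) i j ≤ (K / δ) * Mprod M x (r + 1) i' j := by
  rw [Mprod_succ_left, Matrix.mul_apply, Matrix.mul_apply, Finset.mul_sum]
  refine Finset.sum_le_sum fun k _ => ?_
  have hQ := Mprod_entry_nonneg hδ hbd (shift_mem_sigmaA hx 1) r k j
  rw [← mul_assoc]
  refine mul_le_mul_of_nonneg_right ?_ hQ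
  calc M x i k ≤ K := (hbd x hx i k).2
    _ = (K / δ) * δ := by field_simp
    _ ≤ (K / δ) * M x i' k := by
        refine mul_le_mul_of_nonneg_left (hbd x hx i' k).1 ?_
        have hK : 0 < K := hδ.trans_le ((hbd x hx i k).1.trans (hbd x hx i k).2)
        positivity

lemma Mprod_col_ratio (hδ : 0 < δ)
    (hbd : ∀ x ∈ SigmaA A, ∀ i j, δ ≤ M x i j ∧ M x i j ≤ K)
    {x : ℕ → Fin m} (hx : x ∈ SigmaA A) (r : ℕ) (i j j' : Fin d) :
    Mprod M x (r + 1) i j ≤ (K / δ) * Mprod M x (r + 1) i j' := by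
  rw [Mprod_succ_right, Matrix.mul_apply, Matrix.mul_apply, Finset.mul_sum]
  refine Finset.sum_le_sum fun k _ => ?_
  have hQ := Mprod_entry_nonneg hδ hbd hx r i k
  have hsh : shift^[r] x ∈ SigmaA A := shift_mem_sigmaA hx r
  rw [mul_left_comm]
  refine mul_le_mul_of_nonneg_left ?_ hQ
  calc M (shift^[r] x) k j ≤ K := (hbd _ hsh k j).2
    _ = (K / δ) * δ := by field_simp
    _ ≤ (K / δ) * M (shift^[r] x) k j' := by
        refine mul_le_mul_of_nonneg_left (hbd _ hsh k j').1 ?_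
        have hK : 0 < K := hδ.trans_le ((hbd x hx i j).1.trans (hbd x hx i j).2)
        positivity

lemma Mprod_ratio (hδ : 0 < δ)
    (hbd : ∀ x ∈ SigmaA A, ∀ i j, δ ≤ M x i j ∧ M x i j ≤ K)
    {x : ℕ → Fin m} (hx : x ∈ SigmaA A) (r : ℕ) (i j i' j' : Fin d) :
    Mprod M x (r + 1) i j ≤ (K / δ) ^ 2 * Mprod M x (r + 1) i' j' := by
  have h1 := Mprod_row_ratio hδ hbd hx r i i' j
  have h2 := Mprod_col_ratio hδ hbd hx r i' j j'
  have hKδ : 0 ≤ K / δ := by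
    have hK : 0 < K := hδ.trans_le ((hbd x hx i j).1.trans (hbd x hx i j).2)
    positivity
  calc Mprod M x (r + 1) i j ≤ (K / δ) * Mprod M x (r + 1) i' j := h1
    _ ≤ (K / δ) * ((K / δ) * Mprod M x (r + 1) i' j') := mul_le_mul_of_nonneg_left h2 hKδ
    _ = (K / δ) ^ 2 * Mprod M x (r + 1) i' j' := by ring

end MatrixEst

section NormEst
variable {m d : ℕ} {A : Matrix (Fin m) (Fin m) ℕ}
  {M : (ℕ → Fin m) → Matrix (Fin d) (Fin d) ℝ} {δ K : ℝ}

lemma matNorm_nonneg {B : Matrix (Fin d) (Fin d) ℝ} (hB : ∀ i j, 0 ≤ B i j) :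
    0 ≤ matNorm B :=
  Finset.sum_nonneg fun i _ => Finset.sum_nonneg fun j _ => hB i j

lemma matNorm_le_of_le {B B' : Matrix (Fin d) (Fin d) ℝ} (h : ∀ i j, B i j ≤ B' i j) :
    matNorm B ≤ matNorm B' :=
  Finset.sum_le_sum fun i _ => Finset.sum_le_sum fun j _ => h i j

lemma matNorm_mul_eq (B C : Matrix (Fin d) (Fin d) ℝ) :
    matNorm (B * C) = ∑ i, ∑ k, B i k * ∑ j, C k j := by
  calc matNorm (B * C) = ∑ i, ∑ j, ∑ k, B i k * C k j := by
        unfold matNorm; simp_rw [Matrix.mul_apply]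
    _ = ∑ i, ∑ k, ∑ j, B i k * C k j :=
        Finset.sum_congr rfl fun i _ => Finset.sum_comm
    _ = ∑ i, ∑ k, B i k * ∑ j, C k j := by simp_rw [Finset.mul_sum]

lemma matNorm_mul_le {B C : Matrix (Fin d) (Fin d) ℝ}
    (hB : ∀ i j, 0 ≤ B i j) (hC : ∀ i j, 0 ≤ C i j) :
    matNorm (B * C) ≤ matNorm B * matNorm C := by
  rw [matNorm_mul_eq]
  have h2 : ∀ k : Fin d, (∑ j, C k j) ≤ matNorm C := fun k =>
    Finset.single_le_sum (f := fun k' => ∑ j, C k' j)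
      (fun k' _ => Finset.sum_nonneg fun j _ => hC k' j) (Finset.mem_univ k)
  calc ∑ i, ∑ k, B i k * ∑ j, C k j ≤ ∑ i, ∑ k, B i k * matNorm C :=
        Finset.sum_le_sum fun i _ => Finset.sum_le_sum fun k _ =>
          mul_le_mul_of_nonneg_left (h2 k) (hB i k)
    _ = matNorm B * matNorm C := by
        unfold matNorm
        rw [Finset.sum_mul]
        exact Finset.sum_congr rfl fun i _ => by rw [Finset.sum_mul]

lemma matNorm_mul_ge (hd : 0 < d) {R : ℝ} (hR : 0 < R) {B C : Matrix (Fin d) (Fin d) ℝ}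
    (hB : ∀ i j, 0 ≤ B i j) (hC : ∀ i j, 0 ≤ C i j)
    (hrat : ∀ i j i' j', B i j ≤ R * B i' j') :
    matNorm B * matNorm C ≤ R * (d : ℝ) * matNorm (B * C) := by
  have hkey : ∀ i k, matNorm B ≤ R * (d : ℝ) ^ 2 * B i k := by
    intro i k
    calc matNorm B = ∑ i', ∑ j', B i' j' := rfl
      _ ≤ ∑ _i' : Fin d, ∑ _j' : Fin d, R * B i k :=
          Finset.sum_le_sum fun i' _ => Finset.sum_le_sum fun j' _ => hrat i' j' i k
      _ = R * (d : ℝ) ^ 2 * B i k := by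
          rw [Finset.sum_const, Finset.sum_const, Finset.card_univ, Fintype.card_fin,
            nsmul_eq_mul, nsmul_eq_mul]; ring
  have hSk : ∀ k : Fin d, 0 ≤ ∑ j, C k j := fun k => Finset.sum_nonneg fun j _ => hC k j
  have hmain : (d : ℝ) * (matNorm B * matNorm C) ≤ (d : ℝ) * (R * (d : ℝ) * matNorm (B * C)) := by
    have h1 : (d : ℝ) * (matNorm B * matNorm C) = ∑ i : Fin d, ∑ k, matNorm B * ∑ j, C k j := by
      have : ∀ i : Fin d, (∑ k, matNorm B * ∑ j, C k j) = matNorm B * matNorm C := by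
        intro i
        rw [← Finset.mul_sum]
        rfl
      rw [Finset.sum_congr rfl fun i _ => this i, Finset.sum_const, Finset.card_univ,
        Fintype.card_fin, nsmul_eq_mul]
    have h2 : ∑ i : Fin d, ∑ k, matNorm B * ∑ j, C k j ≤
        ∑ i, ∑ k, (R * (d : ℝ) ^ 2 * B i k) * ∑ j, C k j :=
      Finset.sum_le_sum fun i _ => Finset.sum_le_sum fun k _ =>
        mul_le_mul_of_nonneg_right (hkey i k) (hSk k)
    have h3 : ∑ i, ∑ k, (R * (d : ℝ) ^ 2 * B i k) * (∑ j, C k j) =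
        (d : ℝ) * (R * (d : ℝ) * matNorm (B * C)) := by
      rw [matNorm_mul_eq, Finset.mul_sum, Finset.mul_sum]
      refine Finset.sum_congr rfl fun i _ => ?_
      rw [Finset.mul_sum, Finset.mul_sum]
      exact Finset.sum_congr rfl fun k _ => by ring
    calc (d : ℝ) * (matNorm B * matNorm C) = _ := h1
      _ ≤ _ := h2
      _ = _ := h3
  have hd' : (0 : ℝ) < d := by exact_mod_cast hd
  exact le_of_mul_le_mul_left hmain hd'

end NormEst

section Distortion
variable {m d : ℕ} {A : Matrix (Fin m) (Fin m) ℕ}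
  {M : (ℕ → Fin m) → Matrix (Fin d) (Fin d) ℝ} {δ K C a : ℝ}

lemma geom_aux (h0 : 0 ≤ a) (h1 : a < 1) (n : ℕ) :
    ∑ t ∈ Finset.range n, a ^ t ≤ (1 - a)⁻¹ := by
  have h1a : 0 < 1 - a := by linarith
  rw [inv_eq_one_div, le_div_iff₀ h1a]
  have := geom_sum_mul a n
  have h2 : (∑ t ∈ Finset.range n, a ^ t) * (1 - a) = 1 - a ^ n := by
    have := geom_sum_mul a n
    nlinarith [this]
  rw [h2]
  have : 0 ≤ a ^ n := pow_nonneg h0 n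
  linarith

lemma prod_one_add_le (hC : 0 ≤ C) (h0 : 0 ≤ a) (h1 : a < 1) (n : ℕ) :
    ∏ t ∈ Finset.range n, (1 + C * a ^ (t + 1)) ≤ Real.exp (C * (1 - a)⁻¹) := by
  have hterm : ∀ t ∈ Finset.range n, 1 + C * a ^ (t + 1) ≤ Real.exp (C * a ^ (t + 1)) :=
    fun t _ => by linarith [Real.add_one_le_exp (C * a ^ (t + 1))]
  calc ∏ t ∈ Finset.range n, (1 + C * a ^ (t + 1))
      ≤ ∏ t ∈ Finset.range n, Real.exp (C * a ^ (t + 1)) := by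
        refine Finset.prod_le_prod (fun t _ => ?_) hterm
        positivity
    _ = Real.exp (∑ t ∈ Finset.range n, C * a ^ (t + 1)) := (Real.exp_sum _ _).symm
    _ ≤ Real.exp (C * (1 - a)⁻¹) := by
        rw [Real.exp_le_exp]
        calc ∑ t ∈ Finset.range n, C * a ^ (t + 1) = C * (a * ∑ t ∈ Finset.range n, a ^ t) := by
              rw [Finset.mul_sum, Finset.mul_sum]
              exact Finset.sum_congr rfl fun t _ => by ring
          _ ≤ C * (1 * (1 - a)⁻¹) := by
              have h1a : (0:ℝ) ≤ (1 - a)⁻¹ := by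
                have : 0 < 1 - a := by linarith
                positivity
              refine mul_le_mul_of_nonneg_left ?_ hC
              refine mul_le_mul h1.le (geom_aux h0 h1 n) (Finset.sum_nonneg fun t _ =>
                pow_nonneg h0 t) zero_le_one
          _ = C * (1 - a)⁻¹ := by ring

/-- Bounded distortion: if `x, y ∈ Σ_A` agree on the first `n` coordinates, the entries of
the corresponding length-`n` products are comparable. -/
lemma Mprod_distortion (hδ : 0 < δ)
    (hbd : ∀ x ∈ SigmaA A, ∀ i j, δ ≤ M x i j ∧ M x i j ≤ K)
    (hC : 0 < C) (ha0 : 0 < a) (ha1 : a < 1)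
    (hH : ∀ x ∈ SigmaA A, ∀ y ∈ SigmaA A, ∀ n : ℕ, (∀ k < n, x k = y k) →
      ∀ i j, |M x i j - M y i j| ≤ C * a ^ n)
    {x y : ℕ → Fin m} (hx : x ∈ SigmaA A) (hy : y ∈ SigmaA A) {n : ℕ}
    (hagree : ∀ k < n, x k = y k) (i j : Fin d) :
    Mprod M x n i j ≤ Real.exp (C / δ * (1 - a)⁻¹) * Mprod M y n i j := by
  have key : ∀ n : ℕ, ∀ x ∈ SigmaA A, ∀ y ∈ SigmaA A, (∀ k < n, x k = y k) → ∀ i j,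
      Mprod M x n i j ≤ (∏ t ∈ Finset.range n, (1 + (C / δ) * a ^ (t + 1))) * Mprod M y n i j := by
    intro n
    induction n with
    | zero =>
      intro x hx y hy _ i j
      simp only [Mprod_zero, Finset.range_zero, Finset.prod_empty, one_mul, le_refl]
    | succ n ih =>
      intro x hx y hy hagree i j
      have hshx : shift x ∈ SigmaA A := shift_mem_sigmaA hx 1
      have hshy : shift y ∈ SigmaA A := shift_mem_sigmaA hy 1
      have hagree' : ∀ k < n, shift x k = shift y k := fun k hk => hagree (k + 1) (by omega)
      rw [Mprod_succ_left, Mprod_succ_left, Matrix.mul_apply, Matrix.mul_apply]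
      have hMle : ∀ k : Fin d, M x i k ≤ (1 + (C / δ) * a ^ (n + 1)) * M y i k := by
        intro k
        have h1 := hH x hx y hy (n + 1) hagree i k
        have h2 := abs_le.mp h1
        have h3 : δ ≤ M y i k := (hbd y hy i k).1
        have h4 : M x i k ≤ M y i k + C * a ^ (n + 1) := by linarith [h2.2]
        calc M x i k ≤ M y i k + C * a ^ (n + 1) := h4
          _ ≤ M y i k + (C / δ) * a ^ (n + 1) * M y i k := by
              have : C * a ^ (n + 1) ≤ (C / δ) * a ^ (n + 1) * M y i k := by
                rw [div_mul_eq_mul_div, div_mul_eq_mul_div, le_div_iff₀ hδ]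
                have han : 0 ≤ a ^ (n+1) := by positivity
                nlinarith
              linarith
          _ = (1 + (C / δ) * a ^ (n + 1)) * M y i k := by ring
      have hfac : (0:ℝ) ≤ ∏ t ∈ Finset.range n, (1 + (C / δ) * a ^ (t + 1)) := by
        refine Finset.prod_nonneg fun t _ => ?_
        have : 0 ≤ (C / δ) * a ^ (t + 1) := by positivity
        linarith
      calc ∑ k, M x i k * Mprod M (shift x) n k j
          ≤ ∑ k, ((1 + (C / δ) * a ^ (n + 1)) * M y i k) *
              ((∏ t ∈ Finset.range n, (1 + (C / δ) * a ^ (t + 1))) * Mprod M (shift y) n k j) := by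
            refine Finset.sum_le_sum fun k _ => ?_
            refine mul_le_mul (hMle k) (ih (shift x) hshx (shift y) hshy hagree' k j)
              (Mprod_entry_nonneg hδ hbd hshx n k j) ?_
            have h1 : 0 ≤ M y i k := (hδ.trans_le (hbd y hy i k).1).le
            have : 0 ≤ (C / δ) * a ^ (n + 1) := by positivity
            nlinarith
        _ = (∏ t ∈ Finset.range (n + 1), (1 + (C / δ) * a ^ (t + 1))) *
              ∑ k, M y i k * Mprod M (shift y) n k j := by
            rw [Finset.prod_range_succ, Finset.mul_sum]
            exact Finset.sum_congr rfl fun k _ => by ring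
  have h1 := key n x hx y hy hagree i j
  have h2 : (∏ t ∈ Finset.range n, (1 + (C / δ) * a ^ (t + 1))) ≤
      Real.exp (C / δ * (1 - a)⁻¹) := prod_one_add_le (by positivity) ha0.le ha1 n
  have h3 : 0 ≤ Mprod M y n i j := Mprod_entry_nonneg hδ hbd hy n i j
  calc Mprod M x n i j ≤ _ := h1
    _ ≤ Real.exp (C / δ * (1 - a)⁻¹) * Mprod M y n i j := mul_le_mul_of_nonneg_right h2 h3

lemma matNorm_distortion (hδ : 0 < δ)
    (hbd : ∀ x ∈ SigmaA A, ∀ i j, δ ≤ M x i j ∧ M x i j ≤ K)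
    (hC : 0 < C) (ha0 : 0 < a) (ha1 : a < 1)
    (hH : ∀ x ∈ SigmaA A, ∀ y ∈ SigmaA A, ∀ n : ℕ, (∀ k < n, x k = y k) →
      ∀ i j, |M x i j - M y i j| ≤ C * a ^ n)
    {x y : ℕ → Fin m} (hx : x ∈ SigmaA A) (hy : y ∈ SigmaA A) {n : ℕ}
    (hagree : ∀ k < n, x k = y k) :
    matNorm (Mprod M x n) ≤ Real.exp (C / δ * (1 - a)⁻¹) * matNorm (Mprod M y n) := by
  have h := matNorm_le_of_le (B := Mprod M x n)
    (B' := fun i j => Real.exp (C / δ * (1 - a)⁻¹) * Mprod M y n i j)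
    (fun i j => Mprod_distortion hδ hbd hC ha0 ha1 hH hx hy hagree i j)
  refine h.trans_eq ?_
  unfold matNorm
  rw [Finset.mul_sum]
  exact Finset.sum_congr rfl fun i _ => by rw [Finset.mul_sum]

end Distortion

section RpowAppend

lemma rpow_ratio (q : ℝ) {x y E : ℝ} (hx : 0 < x) (hy : 0 < y) (hE : 1 ≤ E)
    (hxy : x ≤ E * y) (hyx : y ≤ E * x) : x ^ q ≤ E ^ |q| * y ^ q := by
  have hE0 : 0 < E := lt_of_lt_of_le one_pos hE
  have ht : x / y ≤ E := (div_le_iff₀ hy).mpr (by linarith [hxy])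
  have ht' : y / x ≤ E := (div_le_iff₀ hx).mpr (by linarith [hyx])
  have hxq : x ^ q = (x / y) ^ q * y ^ q := by
    rw [← Real.mul_rpow (by positivity) hy.le]
    congr 1
    field_simp
  rw [hxq]
  refine mul_le_mul_of_nonneg_right ?_ (Real.rpow_nonneg hy.le q)
  rcases le_or_gt 0 q with hq | hq
  · rw [abs_of_nonneg hq]
    exact Real.rpow_le_rpow (by positivity) ht hq
  · rw [abs_of_neg hq]
    have h1 : (x / y) ^ q = ((x / y)⁻¹) ^ (-q) := by
      rw [Real.rpow_neg (by positivity), Real.inv_rpow (by positivity), inv_inv]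
    rw [h1]
    have h2 : (x / y)⁻¹ = y / x := by field_simp
    rw [h2]
    exact Real.rpow_le_rpow (by positivity) ht' (by linarith)

variable {m : ℕ} {A : Matrix (Fin m) (Fin m) ℕ}

lemma append_apply_left {n ℓ : ℕ} (I : Fin n → Fin m) (J : Fin ℓ → Fin m)
    {i : ℕ} (h : i < n) (h' : i < n + ℓ) : Fin.append I J ⟨i, h'⟩ = I ⟨i, h⟩ := by
  have : (⟨i, h'⟩ : Fin (n + ℓ)) = Fin.castAdd ℓ ⟨i, h⟩ := by
    apply Fin.ext; rfl
  rw [this, Fin.append_left]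

lemma append_apply_right {n ℓ : ℕ} (I : Fin n → Fin m) (J : Fin ℓ → Fin m)
    {i : ℕ} (h : n ≤ i) (h' : i < n + ℓ) :
    Fin.append I J ⟨i, h'⟩ = J ⟨i - n, by omega⟩ := by
  have : (⟨i, h'⟩ : Fin (n + ℓ)) = Fin.natAdd n ⟨i - n, by omega⟩ := by
    apply Fin.ext; simp; omega
  rw [this, Fin.append_right]

lemma Adm_append_left {n ℓ : ℕ} {I : Fin n → Fin m} {J : Fin ℓ → Fin m}
    (h : Adm A (Fin.append I J)) : Adm A I := by
  intro i hi
  have h2 : i + 1 < n + ℓ := by omega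
  have := h i h2
  rwa [append_apply_left I J (by omega) (by omega),
    append_apply_left I J hi h2] at this

lemma Adm_append_right {n ℓ : ℕ} {I : Fin n → Fin m} {J : Fin ℓ → Fin m}
    (h : Adm A (Fin.append I J)) : Adm A J := by
  intro i hi
  have h2 : n + i + 1 < n + ℓ := by omega
  have := h (n + i) h2
  rw [append_apply_right I J (by omega) (by omega),
    append_apply_right I J (by omega) h2] at this
  convert this using 3 <;> (apply Fin.ext; simp; try omega)

lemma Adm_append_of {n ℓ : ℕ} (hn : 1 ≤ n) (hl : 1 ≤ ℓ) {I : Fin n → Fin m} {J : Fin ℓ → Fin m}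
    (hI : Adm A I) (hJ : Adm A J) (hconn : A (I ⟨n - 1, by omega⟩) (J ⟨0, by omega⟩) = 1) :
    Adm A (Fin.append I J) := by
  intro i hi
  rcases Nat.lt_or_ge (i + 1) n with h1 | h1
  · rw [append_apply_left I J (by omega) (by omega), append_apply_left I J h1 hi]
    exact hI i h1
  · rcases Nat.lt_or_ge i n with h2 | h2
    · have hieq : i = n - 1 := by omega
      rw [append_apply_left I J h2 (by omega), append_apply_right I J h1 hi]
      have e1 : (⟨i, h2⟩ : Fin n) = ⟨n - 1, by omega⟩ := by apply Fin.ext; simp; omega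
      have e2 : (⟨i + 1 - n, by omega⟩ : Fin ℓ) = ⟨0, by omega⟩ := by apply Fin.ext; simp; omega
      rw [e1, e2]
      exact hconn
    · rw [append_apply_right I J h2 (by omega), append_apply_right I J h1 hi]
      have := hJ (i - n) (by omega)
      convert this using 3 <;> (apply Fin.ext; simp; try omega)

end RpowAppend

noncomputable def Dc (δ C a : ℝ) : ℝ := Real.exp (C / δ * (1 - a)⁻¹)
noncomputable def Rdc (d : ℕ) (δ K : ℝ) : ℝ := (K / δ) ^ 2 * d
noncomputable def Lpc (d p : ℕ) (δ : ℝ) : ℝ := (d : ℝ) ^ 2 * (δ * ((d : ℝ) * δ) ^ (p - 1))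
noncomputable def Upc (d p : ℕ) (K : ℝ) : ℝ := (d : ℝ) ^ 2 * (K * ((d : ℝ) * K) ^ (p - 1))
noncomputable def Hc (d p : ℕ) (δ K C a : ℝ) : ℝ := Upc d p K * Dc δ C a * Rdc d δ K / Lpc d p δ
noncomputable def Fc (d : ℕ) (δ K C a q : ℝ) : ℝ := ((Dc δ C a) ^ 2 * Rdc d δ K) ^ |q|
noncomputable def Gc (d p : ℕ) (δ K C a q : ℝ) : ℝ := (Dc δ C a * Hc d p δ K C a) ^ |q|

section Main
variable {m d : ℕ} {A : Matrix (Fin m) (Fin m) ℕ}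
  {M : (ℕ → Fin m) → Matrix (Fin d) (Fin d) ℝ} {δ K C a : ℝ} {p : ℕ}
variable (hd : 0 < d) (hA01 : ∀ i j, A i j = 0 ∨ A i j = 1) (hp : 1 ≤ p)
  (hAp : ∀ i j, 0 < (A ^ p) i j) (hδ : 0 < δ) (hδK : δ ≤ K)
  (hbd : ∀ x ∈ SigmaA A, ∀ i j, δ ≤ M x i j ∧ M x i j ≤ K)
  (hC : 0 < C) (ha0 : 0 < a) (ha1 : a < 1)
  (hH : ∀ x ∈ SigmaA A, ∀ y ∈ SigmaA A, ∀ n : ℕ, (∀ k < n, x k = y k) →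
    ∀ i j, |M x i j - M y i j| ≤ C * a ^ n)
variable (q : ℝ)

include hδ hC ha0 ha1 in
lemma one_le_Dc : 1 ≤ Dc δ C a := by
  unfold Dc
  rw [Real.one_le_exp_iff]
  have h1 : 0 < 1 - a := by linarith
  positivity

include hδ hC ha0 ha1 in
lemma Dc_pos : 0 < Dc δ C a := lt_of_lt_of_le one_pos (one_le_Dc hδ hC ha0 ha1)

include hd hδ hδK in
lemma one_le_Rdc : 1 ≤ Rdc d δ K := by
  unfold Rdc
  have h1 : 1 ≤ K / δ := (one_le_div hδ).mpr hδK
  have h2 : (1 : ℝ) ≤ d := by exact_mod_cast hd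
  nlinarith

include hd hδ hδK in
lemma Rdc_pos : 0 < Rdc d δ K := lt_of_lt_of_le one_pos (one_le_Rdc hd hδ hδK)

include hd hδ in
lemma Lpc_pos : 0 < Lpc d p δ := by
  unfold Lpc
  have h2 : (0 : ℝ) < d := by exact_mod_cast hd
  positivity

include hd hδ hδK in
lemma Lpc_le_Upc : Lpc d p δ ≤ Upc d p K := by
  unfold Lpc Upc
  have h2 : (0 : ℝ) < d := by exact_mod_cast hd
  have hK : 0 < K := hδ.trans_le hδK
  have h3 : ((d : ℝ) * δ) ^ (p - 1) ≤ ((d : ℝ) * K) ^ (p - 1) :=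
    pow_le_pow_left₀ (by positivity) (by nlinarith) _
  have h4 : 0 < ((d : ℝ) * δ) ^ (p - 1) := by positivity
  have := mul_le_mul hδK h3 h4.le hK.le
  nlinarith [sq_nonneg (d : ℝ)]

include hd hδ hδK hC ha0 ha1 in
lemma one_le_Hc : 1 ≤ Hc d p δ K C a := by
  unfold Hc
  rw [le_div_iff₀ (Lpc_pos hd hδ)]
  have h1 := Lpc_le_Upc hd hδ hδK (p := p)
  have h2 := one_le_Dc hδ hC ha0 ha1
  have h3 := one_le_Rdc hd hδ hδK
  have h4 := Lpc_pos hd hδ (p := p)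
  have hU : 0 < Upc d p K := lt_of_lt_of_le h4 h1
  have hDR : 1 ≤ Dc δ C a * Rdc d δ K := by nlinarith
  have h5 : Upc d p K * 1 ≤ Upc d p K * (Dc δ C a * Rdc d δ K) :=
    mul_le_mul_of_nonneg_left hDR hU.le
  nlinarith

include hd hδ hδK hC ha0 ha1 in
lemma one_le_Fc : 1 ≤ Fc d δ K C a q := by
  unfold Fc
  refine Real.one_le_rpow ?_ (abs_nonneg q)
  have h2 := one_le_Dc hδ hC ha0 ha1
  have h3 := one_le_Rdc hd hδ hδK
  nlinarith

include hd hδ hδK hC ha0 ha1 in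
lemma one_le_Gc : 1 ≤ Gc d p δ K C a q := by
  unfold Gc
  refine Real.one_le_rpow ?_ (abs_nonneg q)
  have h2 := one_le_Dc hδ hC ha0 ha1
  have h3 := one_le_Hc hd hδ hδK hC ha0 ha1 (p := p)
  nlinarith

include hδ hδK hbd in
lemma matNorm_Mprod_bounds {x : ℕ → Fin m} (hx : x ∈ SigmaA A) (r : ℕ) :
    (d : ℝ) ^ 2 * (δ * ((d : ℝ) * δ) ^ r) ≤ matNorm (Mprod M x (r + 1)) ∧
      matNorm (Mprod M x (r + 1)) ≤ (d : ℝ) ^ 2 * (K * ((d : ℝ) * K) ^ r) := by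
  constructor
  · calc (d : ℝ) ^ 2 * (δ * ((d : ℝ) * δ) ^ r)
        = ∑ _i : Fin d, ∑ _j : Fin d, δ * ((d : ℝ) * δ) ^ r := by
          rw [Finset.sum_const, Finset.sum_const, Finset.card_univ, Fintype.card_fin,
            nsmul_eq_mul, nsmul_eq_mul]; ring
      _ ≤ matNorm (Mprod M x (r + 1)) :=
          Finset.sum_le_sum fun i _ => Finset.sum_le_sum fun j _ =>
            (Mprod_entry_bounds hδ hδK hbd hx r i j).1
  · calc matNorm (Mprod M x (r + 1))
        ≤ ∑ _i : Fin d, ∑ _j : Fin d, K * ((d : ℝ) * K) ^ r :=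
          Finset.sum_le_sum fun i _ => Finset.sum_le_sum fun j _ =>
            (Mprod_entry_bounds hδ hδK hbd hx r i j).2
      _ = (d : ℝ) ^ 2 * (K * ((d : ℝ) * K) ^ r) := by
          rw [Finset.sum_const, Finset.sum_const, Finset.card_univ, Fintype.card_fin,
            nsmul_eq_mul, nsmul_eq_mul]; ring

include hd hδ hδK hbd in
lemma matNorm_Mprod_pos {x : ℕ → Fin m} (hx : x ∈ SigmaA A) {r : ℕ} (hr : 1 ≤ r) :
    0 < matNorm (Mprod M x r) := by
  obtain ⟨r', rfl⟩ : ∃ r', r = r' + 1 := ⟨r - 1, by omega⟩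
  have h1 := (matNorm_Mprod_bounds hδ hδK hbd hx r').1
  have h2 : (0 : ℝ) < d := by exact_mod_cast hd
  have : 0 < (d : ℝ) ^ 2 * (δ * ((d : ℝ) * δ) ^ r') := by positivity
  linarith

include hd hδ hδK hbd in
lemma matNorm_p_bounds {x : ℕ → Fin m} (hx : x ∈ SigmaA A) (hp : 1 ≤ p) :
    Lpc d p δ ≤ matNorm (Mprod M x p) ∧ matNorm (Mprod M x p) ≤ Upc d p K := by
  obtain ⟨r, hr⟩ : ∃ r, p = r + 1 := ⟨p - 1, by omega⟩
  have h := matNorm_Mprod_bounds hδ hδK hbd hx r (M := M)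
  rw [hr]
  unfold Lpc Upc
  simpa using h

include hd hδ hδK hbd in
lemma matNorm_split {x : ℕ → Fin m} (hx : x ∈ SigmaA A) (n₁ n₂ : ℕ) (hn₁ : 1 ≤ n₁) :
    matNorm (Mprod M x (n₁ + n₂)) ≤
        matNorm (Mprod M x n₁) * matNorm (Mprod M (shift^[n₁] x) n₂) ∧
      matNorm (Mprod M x n₁) * matNorm (Mprod M (shift^[n₁] x) n₂) ≤
        Rdc d δ K * matNorm (Mprod M x (n₁ + n₂)) := by
  have hshx : shift^[n₁] x ∈ SigmaA A := shift_mem_sigmaA hx n₁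
  have hB : ∀ i j, 0 ≤ Mprod M x n₁ i j := Mprod_entry_nonneg hδ hbd hx n₁
  have hCm : ∀ i j, 0 ≤ Mprod M (shift^[n₁] x) n₂ i j := Mprod_entry_nonneg hδ hbd hshx n₂
  obtain ⟨r, rfl⟩ : ∃ r, n₁ = r + 1 := ⟨n₁ - 1, by omega⟩
  have hrat : ∀ i j i' j', Mprod M x (r + 1) i j ≤ (K / δ) ^ 2 * Mprod M x (r + 1) i' j' :=
    fun i j i' j' => Mprod_ratio hδ hbd hx r i j i' j'
  have hKδ : 0 < (K / δ) ^ 2 := by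
    have hK : 0 < K := hδ.trans_le hδK
    positivity
  constructor
  · rw [Mprod_add M x (r + 1) n₂]
    exact matNorm_mul_le hB hCm
  · rw [Mprod_add M x (r + 1) n₂]
    have := matNorm_mul_ge hd hKδ hB hCm hrat
    calc matNorm (Mprod M x (r + 1)) * matNorm (Mprod M (shift^[r + 1] x) n₂)
        ≤ (K / δ) ^ 2 * (d : ℝ) * matNorm (Mprod M x (r + 1) * Mprod M (shift^[r + 1] x) n₂) :=
          this
      _ = Rdc d δ K * matNorm (Mprod M x (r + 1) * Mprod M (shift^[r + 1] x) n₂) := by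
          unfold Rdc; ring_nf

include hδ hδK hbd hC ha0 ha1 hH in
lemma matNorm_dist {x y : ℕ → Fin m} (hx : x ∈ SigmaA A) (hy : y ∈ SigmaA A) {n : ℕ}
    (hagree : ∀ k < n, x k = y k) :
    matNorm (Mprod M x n) ≤ Dc δ C a * matNorm (Mprod M y n) :=
  matNorm_distortion hδ hbd hC ha0 ha1 hH hx hy hagree

lemma cyl_agree {n : ℕ} {I : Fin n → Fin m} {z z' : ℕ → Fin m}
    (hz : z ∈ cylinder A I) (hz' : z' ∈ cylinder A I) : ∀ k < n, z k = z' k := by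
  intro k hk
  have h1 := hz.2 ⟨k, hk⟩
  have h2 := hz'.2 ⟨k, hk⟩
  simp only at h1 h2
  rw [h1, h2]

include hd hδ hδK hbd hC ha0 ha1 hH in
lemma sWord_bounds {n : ℕ} (hn : 1 ≤ n) {I : Fin n → Fin m} {z : ℕ → Fin m}
    (hz : z ∈ cylinder A I) :
    matNorm (Mprod M z n) ^ q ≤ sWord A M q I ∧
      sWord A M q I ≤ (Dc δ C a) ^ |q| * matNorm (Mprod M z n) ^ q := by
  have hDc := one_le_Dc hδ hC ha0 ha1 (a := a) (C := C)
  have hposz := matNorm_Mprod_pos hd hδ hδK hbd hz.1 hn (M := M) (x := z)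
  have hub : ∀ w ∈ (fun x => matNorm (Mprod M x n) ^ q) '' cylinder A I,
      w ≤ (Dc δ C a) ^ |q| * matNorm (Mprod M z n) ^ q := by
    rintro w ⟨z', hz', rfl⟩
    have hposz' := matNorm_Mprod_pos hd hδ hδK hbd hz'.1 hn (M := M) (x := z')
    have h1 : matNorm (Mprod M z' n) ≤ Dc δ C a * matNorm (Mprod M z n) :=
      matNorm_dist hδ hδK hbd hC ha0 ha1 hH hz'.1 hz.1 (cyl_agree hz' hz)
    have h2 : matNorm (Mprod M z n) ≤ Dc δ C a * matNorm (Mprod M z' n) :=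
      matNorm_dist hδ hδK hbd hC ha0 ha1 hH hz.1 hz'.1 (cyl_agree hz hz')
    exact rpow_ratio q hposz' hposz hDc h1 h2
  constructor
  · exact le_csSup ⟨_, hub⟩ ⟨z, hz, rfl⟩
  · exact csSup_le ⟨_, ⟨z, hz, rfl⟩⟩ hub

include hd hA01 hp hAp hδ hδK hbd hC ha0 ha1 hH in
lemma sWord_pos {n : ℕ} (hn : 1 ≤ n) {I : Fin n → Fin m} (hI : Adm A I) :
    0 < sWord A M q I := by
  obtain ⟨z, hz⟩ := cylinder_nonempty hA01 hp hAp hn hI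
  have h1 := (sWord_bounds hd hδ hδK hbd hC ha0 ha1 hH q hn hz).1
  have h2 := matNorm_Mprod_pos hd hδ hδK hbd hz.1 hn (M := M) (x := z)
  have := Real.rpow_pos_of_pos h2 q
  linarith

end Main

section Main2
variable {m d : ℕ} {A : Matrix (Fin m) (Fin m) ℕ}
  {M : (ℕ → Fin m) → Matrix (Fin d) (Fin d) ℝ} {δ K C a : ℝ} {p : ℕ}
variable (hd : 0 < d) (hA01 : ∀ i j, A i j = 0 ∨ A i j = 1) (hp : 1 ≤ p)
  (hAp : ∀ i j, 0 < (A ^ p) i j) (hδ : 0 < δ) (hδK : δ ≤ K)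
  (hbd : ∀ x ∈ SigmaA A, ∀ i j, δ ≤ M x i j ∧ M x i j ≤ K)
  (hC : 0 < C) (ha0 : 0 < a) (ha1 : a < 1)
  (hH : ∀ x ∈ SigmaA A, ∀ y ∈ SigmaA A, ∀ n : ℕ, (∀ k < n, x k = y k) →
    ∀ i j, |M x i j - M y i j| ≤ C * a ^ n)
variable (q : ℝ)

lemma cyl_append_left {n ℓ : ℕ} {I : Fin n → Fin m} {J : Fin ℓ → Fin m} {z : ℕ → Fin m}
    (hz : z ∈ cylinder A (Fin.append I J)) : z ∈ cylinder A I := by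
  refine ⟨hz.1, fun i => ?_⟩
  have h1 := hz.2 ⟨(i : ℕ), by omega⟩
  rwa [append_apply_left I J i.isLt (by omega)] at h1

lemma cyl_append_shift {n ℓ : ℕ} {I : Fin n → Fin m} {J : Fin ℓ → Fin m} {z : ℕ → Fin m}
    (hz : z ∈ cylinder A (Fin.append I J)) : shift^[n] z ∈ cylinder A J := by
  refine ⟨shift_mem_sigmaA hz.1 n, fun i => ?_⟩
  rw [shift_iterate_apply]
  have h1 := hz.2 ⟨(i : ℕ) + n, by omega⟩
  rw [append_apply_right I J (by omega) (by omega)] at h1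
  rw [h1]
  congr 1
  apply Fin.ext
  simp

include hd hA01 hp hAp hδ hδK hbd hC ha0 ha1 hH in
/-- Supermultiplicativity and submultiplicativity of `sWord` along concatenation. -/
lemma sWord_append_comp {n ℓ : ℕ} (hn : 1 ≤ n) (hl : 1 ≤ ℓ)
    {I : Fin n → Fin m} {J : Fin ℓ → Fin m} (hIJ : Adm A (Fin.append I J)) :
    sWord A M q (Fin.append I J) ≤ Fc d δ K C a q * (sWord A M q I * sWord A M q J) ∧
      sWord A M q I * sWord A M q J ≤ Fc d δ K C a q * sWord A M q (Fin.append I J) := by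
  obtain ⟨z, hz⟩ := cylinder_nonempty hA01 hp hAp (n := n + ℓ) (by omega) hIJ
  have hzI : z ∈ cylinder A I := cyl_append_left hz
  have hzJ : shift^[n] z ∈ cylinder A J := cyl_append_shift hz
  set u := matNorm (Mprod M z (n + ℓ)) with hu
  set v := matNorm (Mprod M z n) with hv
  set w := matNorm (Mprod M (shift^[n] z) ℓ) with hw
  have hupos : 0 < u := matNorm_Mprod_pos hd hδ hδK hbd hz.1 (by omega)
  have hvpos : 0 < v := matNorm_Mprod_pos hd hδ hδK hbd hz.1 hn
  have hwpos : 0 < w := matNorm_Mprod_pos hd hδ hδK hbd hzJ.1 hl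
  have hsplit := matNorm_split hd hδ hδK hbd hz.1 n ℓ hn
  have hRd := one_le_Rdc hd hδ hδK (K := K)
  have hRdpos : 0 < Rdc d δ K := lt_of_lt_of_le one_pos hRd
  have h1 : u ≤ Rdc d δ K * (v * w) :=
    le_trans hsplit.1 (le_mul_of_one_le_left (by positivity) hRd)
  have h2 : v * w ≤ Rdc d δ K * u := hsplit.2
  have hr1 : u ^ q ≤ (Rdc d δ K) ^ |q| * (v * w) ^ q :=
    rpow_ratio q hupos (mul_pos hvpos hwpos) hRd h1 h2
  have hr2 : (v * w) ^ q ≤ (Rdc d δ K) ^ |q| * u ^ q :=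
    rpow_ratio q (mul_pos hvpos hwpos) hupos hRd h2 h1
  have hvw : (v * w) ^ q = v ^ q * w ^ q := Real.mul_rpow hvpos.le hwpos.le
  have hIJbd := sWord_bounds hd hδ hδK hbd hC ha0 ha1 hH q (n := n + ℓ) (by omega) hz
  have hIbd := sWord_bounds hd hδ hδK hbd hC ha0 ha1 hH q hn hzI
  have hJbd := sWord_bounds hd hδ hδK hbd hC ha0 ha1 hH q hl hzJ
  have hD1 := one_le_Dc hδ hC ha0 ha1 (a := a) (C := C)
  have hDq : 1 ≤ (Dc δ C a) ^ |q| := Real.one_le_rpow hD1 (abs_nonneg q)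
  have hRdq : 1 ≤ (Rdc d δ K) ^ |q| := Real.one_le_rpow hRd (abs_nonneg q)
  have hFc : Fc d δ K C a q = (Dc δ C a) ^ |q| * (Dc δ C a) ^ |q| * (Rdc d δ K) ^ |q| := by
    unfold Fc
    rw [Real.mul_rpow (by positivity) (by positivity),
      ← Real.rpow_natCast (Dc δ C a) 2, ← Real.rpow_mul (by positivity)]
    push_cast
    rw [show (2 : ℝ) * |q| = |q| + |q| by ring, Real.rpow_add (by positivity)]
  have huq : 0 < u ^ q := Real.rpow_pos_of_pos hupos q
  have hvq : 0 < v ^ q := Real.rpow_pos_of_pos hvpos q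
  have hwq : 0 < w ^ q := Real.rpow_pos_of_pos hwpos q
  constructor
  · calc sWord A M q (Fin.append I J) ≤ (Dc δ C a) ^ |q| * u ^ q := hIJbd.2
      _ ≤ (Dc δ C a) ^ |q| * ((Rdc d δ K) ^ |q| * (v ^ q * w ^ q)) := by
          rw [← hvw]
          exact mul_le_mul_of_nonneg_left hr1 (by positivity)
      _ ≤ Fc d δ K C a q * (sWord A M q I * sWord A M q J) := by
          rw [hFc]
          have hsI := hIbd.1
          have hsJ := hJbd.1
          have h0vq : (0:ℝ) ≤ v ^ q := hvq.le
          have h0wq : (0:ℝ) ≤ w ^ q := hwq.le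
          have hmul : v ^ q * w ^ q ≤ sWord A M q I * sWord A M q J :=
            mul_le_mul hsI hsJ h0wq (le_trans h0vq hsI)
          calc (Dc δ C a) ^ |q| * ((Rdc d δ K) ^ |q| * (v ^ q * w ^ q))
              ≤ (Dc δ C a) ^ |q| * ((Rdc d δ K) ^ |q| * (sWord A M q I * sWord A M q J)) := by
                refine mul_le_mul_of_nonneg_left (mul_le_mul_of_nonneg_left hmul ?_) ?_
                  <;> positivity
            _ = (Dc δ C a) ^ |q| * (Rdc d δ K) ^ |q| *
                  (sWord A M q I * sWord A M q J) := by ring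
            _ ≤ (Dc δ C a) ^ |q| * ((Dc δ C a) ^ |q| * (Rdc d δ K) ^ |q| *
                  (sWord A M q I * sWord A M q J)) := by
                refine le_mul_of_one_le_left ?_ hDq
                have hsIpos : 0 < sWord A M q I := lt_of_lt_of_le hvq hIbd.1
                have hsJpos : 0 < sWord A M q J := lt_of_lt_of_le hwq hJbd.1
                positivity
            _ = (Dc δ C a) ^ |q| * (Dc δ C a) ^ |q| * (Rdc d δ K) ^ |q| *
                  (sWord A M q I * sWord A M q J) := by ring
  · calc sWord A M q I * sWord A M q J
        ≤ ((Dc δ C a) ^ |q| * v ^ q) * ((Dc δ C a) ^ |q| * w ^ q) :=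
          mul_le_mul hIbd.2 hJbd.2 (le_trans hwq.le hJbd.1) (by positivity)
      _ = (Dc δ C a) ^ |q| * (Dc δ C a) ^ |q| * (v ^ q * w ^ q) := by ring
      _ ≤ (Dc δ C a) ^ |q| * (Dc δ C a) ^ |q| * ((Rdc d δ K) ^ |q| * u ^ q) := by
          rw [← hvw]
          exact mul_le_mul_of_nonneg_left hr2 (by positivity)
      _ = Fc d δ K C a q * u ^ q := by rw [hFc]; ring
      _ ≤ Fc d δ K C a q * sWord A M q (Fin.append I J) := by
          refine mul_le_mul_of_nonneg_left hIJbd.1 ?_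
          rw [hFc]; positivity

end Main2

section Main3
variable {m d : ℕ} {A : Matrix (Fin m) (Fin m) ℕ}
  {M : (ℕ → Fin m) → Matrix (Fin d) (Fin d) ℝ} {δ K C a : ℝ} {p : ℕ}
variable (hd : 0 < d) (hA01 : ∀ i j, A i j = 0 ∨ A i j = 1) (hp : 1 ≤ p)
  (hAp : ∀ i j, 0 < (A ^ p) i j) (hδ : 0 < δ) (hδK : δ ≤ K)
  (hbd : ∀ x ∈ SigmaA A, ∀ i j, δ ≤ M x i j ∧ M x i j ≤ K)
  (hC : 0 < C) (ha0 : 0 < a) (ha1 : a < 1)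
  (hH : ∀ x ∈ SigmaA A, ∀ y ∈ SigmaA A, ∀ n : ℕ, (∀ k < n, x k = y k) →
    ∀ i j, |M x i j - M y i j| ≤ C * a ^ n)
variable (q : ℝ)

include hd hδ hδK hbd hC ha0 ha1 hH hp in
/-- If two admissible words of length `ℓ > p` agree from index `p` on,
their `sWord` values are comparable; auxiliary norm-level inequality. -/
lemma norm_suffix_comp {ℓ : ℕ} (hpl : p < ℓ) {J J' : Fin ℓ → Fin m}
    (hag : ∀ (k : ℕ) (h : k < ℓ), p ≤ k → J ⟨k, h⟩ = J' ⟨k, h⟩)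
    {y y' : ℕ → Fin m} (hy : y ∈ cylinder A J) (hy' : y' ∈ cylinder A J') :
    matNorm (Mprod M y ℓ) ≤ Hc d p δ K C a * matNorm (Mprod M y' ℓ) := by
  set r := ℓ - p with hr
  have hℓeq : ℓ = p + r := by omega
  have hr1 : 1 ≤ r := by omega
  have hsy : shift^[p] y ∈ SigmaA A := shift_mem_sigmaA hy.1 p
  have hsy' : shift^[p] y' ∈ SigmaA A := shift_mem_sigmaA hy'.1 p
  have hsplit1 := (matNorm_split hd hδ hδK hbd hy.1 p r hp).1
  have hsplit2 := (matNorm_split hd hδ hδK hbd hy'.1 p r hp).2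
  rw [← hℓeq] at hsplit1 hsplit2
  have hb1 := matNorm_p_bounds hd hδ hδK hbd hy.1 hp (M := M)
  have hb2 := matNorm_p_bounds hd hδ hδK hbd hy'.1 hp (M := M)
  have hdist : matNorm (Mprod M (shift^[p] y) r) ≤
      Dc δ C a * matNorm (Mprod M (shift^[p] y') r) := by
    refine matNorm_dist hδ hδK hbd hC ha0 ha1 hH hsy hsy' fun k hk => ?_
    rw [shift_iterate_apply, shift_iterate_apply]
    have h1 := hy.2 ⟨k + p, by omega⟩
    have h2 := hy'.2 ⟨k + p, by omega⟩
    simp only at h1 h2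
    rw [h1, h2]
    exact hag (k + p) (by omega) (by omega)
  -- abbreviations
  set N := matNorm (Mprod M y ℓ) with hN
  set N' := matNorm (Mprod M y' ℓ) with hN'
  set S := matNorm (Mprod M (shift^[p] y) r) with hS
  set S' := matNorm (Mprod M (shift^[p] y') r) with hS'
  set P := matNorm (Mprod M y p) with hP
  set P' := matNorm (Mprod M y' p) with hP'
  have hSpos : 0 < S := matNorm_Mprod_pos hd hδ hδK hbd hsy hr1
  have hS'pos : 0 < S' := matNorm_Mprod_pos hd hδ hδK hbd hsy' hr1
  have hPpos : 0 < P := matNorm_Mprod_pos hd hδ hδK hbd hy.1 hp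
  have hP'pos : 0 < P' := matNorm_Mprod_pos hd hδ hδK hbd hy'.1 hp
  have hN'pos : 0 < N' := matNorm_Mprod_pos hd hδ hδK hbd hy'.1 (by omega)
  have hLp := Lpc_pos hd hδ (p := p)
  have hRd := one_le_Rdc hd hδ hδK (K := K)
  have hRdpos : 0 < Rdc d δ K := lt_of_lt_of_le one_pos hRd
  have hD1 := one_le_Dc hδ hC ha0 ha1 (a := a) (C := C)
  -- N ≤ P * S ≤ Up * (D * S'), and Lp * S' ≤ P' * S' ≤ Rd * N'
  have key1 : N ≤ Upc d p K * (Dc δ C a * S') := by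
    calc N ≤ P * S := hsplit1
      _ ≤ Upc d p K * (Dc δ C a * S') := by
          have h01 : P ≤ Upc d p K := hb1.2
          have h02 : S ≤ Dc δ C a * S' := hdist
          have : 0 ≤ S := hSpos.le
          nlinarith
  have key2 : Lpc d p δ * S' ≤ Rdc d δ K * N' := by
    calc Lpc d p δ * S' ≤ P' * S' := mul_le_mul_of_nonneg_right hb2.1 hS'pos.le
      _ ≤ Rdc d δ K * N' := hsplit2
  -- combine
  unfold Hc
  rw [div_mul_eq_mul_div, le_div_iff₀ hLp]
  calc N * Lpc d p δ ≤ (Upc d p K * (Dc δ C a * S')) * Lpc d p δ :=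
        mul_le_mul_of_nonneg_right key1 hLp.le
    _ = (Upc d p K * Dc δ C a) * (Lpc d p δ * S') := by ring
    _ ≤ (Upc d p K * Dc δ C a) * (Rdc d δ K * N') := by
        refine mul_le_mul_of_nonneg_left key2 ?_
        have hU : 0 < Upc d p K := lt_of_lt_of_le hLp (Lpc_le_Upc hd hδ hδK)
        positivity
    _ = Upc d p K * Dc δ C a * Rdc d δ K * N' := by ring

include hd hδ hδK hbd hC ha0 ha1 hH hp in
/-- Same for words agreeing on the first `ℓ - p` coordinates. -/
lemma norm_prefix_comp {ℓ : ℕ} (hpl : p < ℓ) {J J' : Fin ℓ → Fin m}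
    (hag : ∀ (k : ℕ) (h : k < ℓ), k < ℓ - p → J ⟨k, h⟩ = J' ⟨k, h⟩)
    {y y' : ℕ → Fin m} (hy : y ∈ cylinder A J) (hy' : y' ∈ cylinder A J') :
    matNorm (Mprod M y ℓ) ≤ Hc d p δ K C a * matNorm (Mprod M y' ℓ) := by
  set r := ℓ - p with hr
  have hℓeq : ℓ = r + p := by omega
  have hr1 : 1 ≤ r := by omega
  have hsy : shift^[r] y ∈ SigmaA A := shift_mem_sigmaA hy.1 r
  have hsy' : shift^[r] y' ∈ SigmaA A := shift_mem_sigmaA hy'.1 r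
  have hsplit1 := (matNorm_split hd hδ hδK hbd hy.1 r p hr1).1
  have hsplit2 := (matNorm_split hd hδ hδK hbd hy'.1 r p hr1).2
  rw [← hℓeq] at hsplit1 hsplit2
  have hb1 := matNorm_p_bounds hd hδ hδK hbd hsy hp (M := M)
  have hb2 := matNorm_p_bounds hd hδ hδK hbd hsy' hp (M := M)
  have hdist : matNorm (Mprod M y r) ≤ Dc δ C a * matNorm (Mprod M y' r) := by
    refine matNorm_dist hδ hδK hbd hC ha0 ha1 hH hy.1 hy'.1 fun k hk => ?_
    have h1 := hy.2 ⟨k, by omega⟩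
    have h2 := hy'.2 ⟨k, by omega⟩
    simp only at h1 h2
    rw [h1, h2]
    exact hag k (by omega) (by omega)
  set N := matNorm (Mprod M y ℓ) with hN
  set N' := matNorm (Mprod M y' ℓ) with hN'
  set S := matNorm (Mprod M y r) with hS
  set S' := matNorm (Mprod M y' r) with hS'
  set P := matNorm (Mprod M (shift^[r] y) p) with hP
  set P' := matNorm (Mprod M (shift^[r] y') p) with hP'
  have hSpos : 0 < S := matNorm_Mprod_pos hd hδ hδK hbd hy.1 hr1
  have hS'pos : 0 < S' := matNorm_Mprod_pos hd hδ hδK hbd hy'.1 hr1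
  have hPpos : 0 < P := matNorm_Mprod_pos hd hδ hδK hbd hsy hp
  have hP'pos : 0 < P' := matNorm_Mprod_pos hd hδ hδK hbd hsy' hp
  have hN'pos : 0 < N' := matNorm_Mprod_pos hd hδ hδK hbd hy'.1 (by omega)
  have hLp := Lpc_pos hd hδ (p := p)
  have hRd := one_le_Rdc hd hδ hδK (K := K)
  have hD1 := one_le_Dc hδ hC ha0 ha1 (a := a) (C := C)
  have key1 : N ≤ Upc d p K * (Dc δ C a * S') := by
    calc N ≤ S * P := hsplit1
      _ ≤ Upc d p K * (Dc δ C a * S') := by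
          have h01 : P ≤ Upc d p K := hb1.2
          have h02 : S ≤ Dc δ C a * S' := hdist
          have : 0 ≤ S := hSpos.le
          nlinarith
  have key2 : Lpc d p δ * S' ≤ Rdc d δ K * N' := by
    calc Lpc d p δ * S' = S' * Lpc d p δ := by ring
      _ ≤ S' * P' := mul_le_mul_of_nonneg_left hb2.1 hS'pos.le
      _ ≤ Rdc d δ K * N' := hsplit2
  unfold Hc
  rw [div_mul_eq_mul_div, le_div_iff₀ hLp]
  calc N * Lpc d p δ ≤ (Upc d p K * (Dc δ C a * S')) * Lpc d p δ :=
        mul_le_mul_of_nonneg_right key1 hLp.le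
    _ = (Upc d p K * Dc δ C a) * (Lpc d p δ * S') := by ring
    _ ≤ (Upc d p K * Dc δ C a) * (Rdc d δ K * N') := by
        refine mul_le_mul_of_nonneg_left key2 ?_
        have hU : 0 < Upc d p K := lt_of_lt_of_le hLp (Lpc_le_Upc hd hδ hδK)
        positivity
    _ = Upc d p K * Dc δ C a * Rdc d δ K * N' := by ring

include hd hA01 hp hAp hδ hδK hbd hC ha0 ha1 hH in
lemma sWord_comp_of_norm_comp {ℓ : ℕ} (hl : 1 ≤ ℓ) {J J' : Fin ℓ → Fin m}
    (hJ : Adm A J) (hJ' : Adm A J')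
    (hnc : ∀ y ∈ cylinder A J, ∀ y' ∈ cylinder A J',
      matNorm (Mprod M y ℓ) ≤ Hc d p δ K C a * matNorm (Mprod M y' ℓ) ∧
      matNorm (Mprod M y' ℓ) ≤ Hc d p δ K C a * matNorm (Mprod M y ℓ)) :
    sWord A M q J ≤ Gc d p δ K C a q * sWord A M q J' := by
  obtain ⟨y, hy⟩ := cylinder_nonempty hA01 hp hAp hl hJ
  obtain ⟨y', hy'⟩ := cylinder_nonempty hA01 hp hAp hl hJ'
  have hNpos : 0 < matNorm (Mprod M y ℓ) := matNorm_Mprod_pos hd hδ hδK hbd hy.1 hl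
  have hN'pos : 0 < matNorm (Mprod M y' ℓ) := matNorm_Mprod_pos hd hδ hδK hbd hy'.1 hl
  have hHc1 := one_le_Hc hd hδ hδK hC ha0 ha1 (p := p)
  obtain ⟨hc1, hc2⟩ := hnc y hy y' hy'
  have hrq : matNorm (Mprod M y ℓ) ^ q ≤
      (Hc d p δ K C a) ^ |q| * matNorm (Mprod M y' ℓ) ^ q :=
    rpow_ratio q hNpos hN'pos hHc1 hc1 hc2
  have hbd1 := sWord_bounds hd hδ hδK hbd hC ha0 ha1 hH q hl hy
  have hbd2 := sWord_bounds hd hδ hδK hbd hC ha0 ha1 hH q hl hy'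
  have hDpos := Dc_pos hδ hC ha0 ha1 (a := a) (C := C)
  have hHpos : 0 < Hc d p δ K C a := lt_of_lt_of_le one_pos hHc1
  have hGc : Gc d p δ K C a q = (Dc δ C a) ^ |q| * (Hc d p δ K C a) ^ |q| := by
    unfold Gc
    rw [Real.mul_rpow hDpos.le hHpos.le]
  calc sWord A M q J ≤ (Dc δ C a) ^ |q| * matNorm (Mprod M y ℓ) ^ q := hbd1.2
    _ ≤ (Dc δ C a) ^ |q| * ((Hc d p δ K C a) ^ |q| * matNorm (Mprod M y' ℓ) ^ q) :=
        mul_le_mul_of_nonneg_left hrq (Real.rpow_nonneg hDpos.le _)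
    _ = Gc d p δ K C a q * matNorm (Mprod M y' ℓ) ^ q := by rw [hGc]; ring
    _ ≤ Gc d p δ K C a q * sWord A M q J' := by
        refine mul_le_mul_of_nonneg_left hbd2.1 ?_
        rw [hGc]
        exact mul_nonneg (Real.rpow_nonneg hDpos.le _) (Real.rpow_nonneg hHpos.le _)

end Main3

section Main4
variable {m d : ℕ} {A : Matrix (Fin m) (Fin m) ℕ}
  {M : (ℕ → Fin m) → Matrix (Fin d) (Fin d) ℝ} {δ K C a : ℝ} {p : ℕ}
variable (hd : 0 < d) (hA01 : ∀ i j, A i j = 0 ∨ A i j = 1) (hp : 1 ≤ p)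
  (hAp : ∀ i j, 0 < (A ^ p) i j) (hδ : 0 < δ) (hδK : δ ≤ K)
  (hbd : ∀ x ∈ SigmaA A, ∀ i j, δ ≤ M x i j ∧ M x i j ≤ K)
  (hC : 0 < C) (ha0 : 0 < a) (ha1 : a < 1)
  (hH : ∀ x ∈ SigmaA A, ∀ y ∈ SigmaA A, ∀ n : ℕ, (∀ k < n, x k = y k) →
    ∀ i j, |M x i j - M y i j| ≤ C * a ^ n)
  (q : ℝ)

-- generic counting/summation step
lemma sum_comp_le {ℓ : ℕ} (Φ : (Fin ℓ → Fin m) → (Fin ℓ → Fin m))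
    (T : Finset (Fin ℓ → Fin m)) (f : (Fin ℓ → Fin m) → ℝ)
    (himg : ∀ J ∈ admWords A ℓ, Φ J ∈ T)
    (hfib : ∀ y, ((admWords A ℓ).filter (fun J => Φ J = y)).card ≤ m ^ p)
    (hf : ∀ y ∈ T, 0 ≤ f y) :
    ∑ J ∈ admWords A ℓ, f (Φ J) ≤ (m : ℝ) ^ p * ∑ y ∈ T, f y := by
  rw [Finset.sum_comp f Φ]
  have himg' : (admWords A ℓ).image Φ ⊆ T := by
    intro y hy
    obtain ⟨J, hJ, rfl⟩ := Finset.mem_image.mp hy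
    exact himg J hJ
  calc ∑ y ∈ (admWords A ℓ).image Φ, ((admWords A ℓ).filter fun J => Φ J = y).card • f y
      ≤ ∑ y ∈ (admWords A ℓ).image Φ, (m : ℝ) ^ p * f y := by
        refine Finset.sum_le_sum fun y hy => ?_
        rw [nsmul_eq_mul]
        refine mul_le_mul_of_nonneg_right ?_ (hf y (himg' hy))
        calc (((admWords A ℓ).filter fun J => Φ J = y).card : ℝ) ≤ ((m ^ p : ℕ) : ℝ) := by
              exact_mod_cast hfib y
          _ = (m : ℝ) ^ p := by push_cast; ring
    _ ≤ ∑ y ∈ T, (m : ℝ) ^ p * f y := by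
        refine Finset.sum_le_sum_of_subset_of_nonneg himg' fun y hy _ => ?_
        have h0 : (0 : ℝ) ≤ (m : ℝ) ^ p := by positivity
        exact mul_nonneg h0 (hf y hy)
    _ = (m : ℝ) ^ p * ∑ y ∈ T, f y := by rw [Finset.mul_sum]

lemma fiber_card_le (hm : 0 < m) {ℓ : ℕ} (hpl : p ≤ ℓ)
    (Φ : (Fin ℓ → Fin m) → (Fin ℓ → Fin m)) (hkeep : ∀ J (k : Fin ℓ), p ≤ (k : ℕ) → Φ J k = J k)
    (hdet : ∀ J₁ J₂, (∀ t : Fin p, J₁ ⟨(t : ℕ), by omega⟩ = J₂ ⟨(t : ℕ), by omega⟩) →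
      Φ J₁ = Φ J₂ → J₁ = J₂) (y : Fin ℓ → Fin m) :
    ((admWords A ℓ).filter (fun J => Φ J = y)).card ≤ m ^ p := by
  have hinj : Set.InjOn (fun (J : Fin ℓ → Fin m) (t : Fin p) => J ⟨(t : ℕ), by omega⟩)
      ((admWords A ℓ).filter (fun J => Φ J = y)) := by
    intro J₁ h₁ J₂ h₂ heq
    have hy₁ : Φ J₁ = y := (Finset.mem_filter.mp h₁).2
    have hy₂ : Φ J₂ = y := (Finset.mem_filter.mp h₂).2
    exact hdet J₁ J₂ (fun t => congrFun heq t) (hy₁.trans hy₂.symm)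
  calc ((admWords A ℓ).filter (fun J => Φ J = y)).card
      ≤ (Finset.univ : Finset (Fin p → Fin m)).card :=
        Finset.card_le_card_of_injOn _ (fun _ _ => Finset.mem_univ _) hinj
    _ = m ^ p := by simp

include hd hA01 hp hAp hδ hδK hbd hC ha0 ha1 hH in
/-- Lower comparison for the `IJ` sum: modifying the first `p` letters. -/
lemma sSum_le_filter_append_left {n ℓ : ℕ} (hn : 1 ≤ n) (hpl : p < ℓ)
    {I : Fin n → Fin m} (hI : Adm A I) :
    sSum A M q ℓ ≤ Gc d p δ K C a q * (m : ℝ) ^ p *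
      ∑ J ∈ Finset.univ.filter (fun J : Fin ℓ → Fin m => Adm A (Fin.append I J)),
        sWord A M q J := by
  have hm : 0 < m := Fin.pos (I ⟨0, by omega⟩)
  have hl : 1 ≤ ℓ := by omega
  -- choose connecting paths
  have hpath : ∀ J : Fin ℓ → Fin m, ∃ u : ℕ → Fin m, u 0 = I ⟨n - 1, by omega⟩ ∧
      u (p + 1) = J ⟨p, hpl⟩ ∧ ∀ t < p + 1, A (u t) (u (t + 1)) = 1 := fun J =>
    path_of_pow_pos hA01 (A_pow_succ_pos hA01 hp hAp _ _)
  choose u hu0 hup hue using hpath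
  set Φ : (Fin ℓ → Fin m) → (Fin ℓ → Fin m) :=
    fun J k => if (k : ℕ) < p then u J ((k : ℕ) + 1) else J k with hΦ
  have hkeep : ∀ J (k : Fin ℓ), p ≤ (k : ℕ) → Φ J k = J k := by
    intro J k hk
    simp only [hΦ, if_neg (by omega : ¬ ((k : ℕ) < p))]
  have hΦadm : ∀ J : Fin ℓ → Fin m, Adm A J → Adm A (Φ J) := by
    intro J hJ t ht
    rcases Nat.lt_or_ge (t + 1) p with h1 | h1
    · simp only [hΦ, if_pos (by omega : t < p), if_pos h1]
      exact hue J (t + 1) (by omega)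
    · rcases Nat.lt_or_ge t p with h2 | h2
      · have hteq : t + 1 = p := by omega
        simp only [hΦ, if_pos h2, if_neg (by omega : ¬ (t + 1 < p))]
        have e1 : (⟨t + 1, ht⟩ : Fin ℓ) = ⟨p, hpl⟩ := by apply Fin.ext; simp; omega
        rw [e1, ← hup J, hteq]
        exact hue J p (by omega)
      · simp only [hΦ, if_neg (by omega : ¬ (t < p)), if_neg (by omega : ¬ (t + 1 < p))]
        exact hJ t ht
  have hΦapp : ∀ J : Fin ℓ → Fin m, Adm A J → Adm A (Fin.append I (Φ J)) := by
    intro J hJ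
    refine Adm_append_of hn hl hI (hΦadm J hJ) ?_
    have e0 : Φ J ⟨0, by omega⟩ = u J 1 := by
      show (if ((⟨0, by omega⟩ : Fin ℓ) : ℕ) < p then u J (((⟨0, by omega⟩ : Fin ℓ) : ℕ) + 1)
        else J ⟨0, by omega⟩) = u J 1
      rw [if_pos (show ((⟨0, by omega⟩ : Fin ℓ) : ℕ) < p by simp; omega)]
    rw [e0, ← hu0 J]
    exact hue J 0 (by omega)
  have hdet : ∀ J₁ J₂ : Fin ℓ → Fin m,
      (∀ t : Fin p, J₁ ⟨(t : ℕ), by omega⟩ = J₂ ⟨(t : ℕ), by omega⟩) → Φ J₁ = Φ J₂ → J₁ = J₂ := by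
    intro J₁ J₂ hpre hΦeq
    funext k
    rcases Nat.lt_or_ge (k : ℕ) p with h1 | h1
    · have := hpre ⟨(k : ℕ), h1⟩
      simpa [Fin.ext_iff] using this
    · have h2 := congrFun hΦeq k
      rwa [hkeep J₁ k h1, hkeep J₂ k h1] at h2
  -- termwise comparison
  have hGpos : 0 < Gc d p δ K C a q :=
    lt_of_lt_of_le one_pos (one_le_Gc hd hδ hδK hC ha0 ha1 q)
  have hterm : ∀ J ∈ admWords A ℓ, sWord A M q J ≤
      Gc d p δ K C a q * sWord A M q (Φ J) := by
    intro J hJmem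
    have hJ : Adm A J := (Finset.mem_filter.mp hJmem).2
    refine sWord_comp_of_norm_comp hd hA01 hp hAp hδ hδK hbd hC ha0 ha1 hH q hl hJ
      (hΦadm J hJ) ?_
    intro y hy y' hy'
    have hag : ∀ (k : ℕ) (h : k < ℓ), p ≤ k → J ⟨k, h⟩ = Φ J ⟨k, h⟩ := by
      intro k h hk
      exact (hkeep J ⟨k, h⟩ hk).symm
    have hag' : ∀ (k : ℕ) (h : k < ℓ), p ≤ k → Φ J ⟨k, h⟩ = J ⟨k, h⟩ := by
      intro k h hk
      exact hkeep J ⟨k, h⟩ hk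
    exact ⟨norm_suffix_comp hd hp hδ hδK hbd hC ha0 ha1 hH hpl hag hy hy',
      norm_suffix_comp hd hp hδ hδK hbd hC ha0 ha1 hH hpl hag' hy' hy⟩
  -- positivity of sWord on the target finset
  have hTpos : ∀ y ∈ Finset.univ.filter (fun J : Fin ℓ → Fin m => Adm A (Fin.append I J)),
      0 ≤ sWord A M q y := by
    intro y hy
    have hadm : Adm A (Fin.append I y) := (Finset.mem_filter.mp hy).2
    exact (sWord_pos hd hA01 hp hAp hδ hδK hbd hC ha0 ha1 hH q hl
      (Adm_append_right hadm)).le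
  calc sSum A M q ℓ = ∑ J ∈ admWords A ℓ, sWord A M q J := rfl
    _ ≤ ∑ J ∈ admWords A ℓ, Gc d p δ K C a q * sWord A M q (Φ J) :=
        Finset.sum_le_sum hterm
    _ = Gc d p δ K C a q * ∑ J ∈ admWords A ℓ, sWord A M q (Φ J) := by
        rw [Finset.mul_sum]
    _ ≤ Gc d p δ K C a q * ((m : ℝ) ^ p *
          ∑ y ∈ Finset.univ.filter (fun J : Fin ℓ → Fin m => Adm A (Fin.append I J)),
            sWord A M q y) := by
        refine mul_le_mul_of_nonneg_left ?_ hGpos.le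
        refine sum_comp_le Φ _ _ ?_ ?_ hTpos
        · intro J hJmem
          have hJ : Adm A J := (Finset.mem_filter.mp hJmem).2
          exact Finset.mem_filter.mpr ⟨Finset.mem_univ _, hΦapp J hJ⟩
        · exact fiber_card_le (d := d) hm (le_of_lt hpl) Φ hkeep hdet
    _ = Gc d p δ K C a q * (m : ℝ) ^ p *
          ∑ J ∈ Finset.univ.filter (fun J : Fin ℓ → Fin m => Adm A (Fin.append I J)),
            sWord A M q J := by ring

end Main4

section Main5
variable {m d : ℕ} {A : Matrix (Fin m) (Fin m) ℕ}
  {M : (ℕ → Fin m) → Matrix (Fin d) (Fin d) ℝ} {δ K C a : ℝ} {p : ℕ}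
variable (hd : 0 < d) (hA01 : ∀ i j, A i j = 0 ∨ A i j = 1) (hp : 1 ≤ p)
  (hAp : ∀ i j, 0 < (A ^ p) i j) (hδ : 0 < δ) (hδK : δ ≤ K)
  (hbd : ∀ x ∈ SigmaA A, ∀ i j, δ ≤ M x i j ∧ M x i j ≤ K)
  (hC : 0 < C) (ha0 : 0 < a) (ha1 : a < 1)
  (hH : ∀ x ∈ SigmaA A, ∀ y ∈ SigmaA A, ∀ n : ℕ, (∀ k < n, x k = y k) →
    ∀ i j, |M x i j - M y i j| ≤ C * a ^ n)
  (q : ℝ)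

lemma fiber_card_le_gen {ℓ : ℕ} (Φ : (Fin ℓ → Fin m) → (Fin ℓ → Fin m))
    (ρ : (Fin ℓ → Fin m) → (Fin p → Fin m))
    (hdet : ∀ J₁ J₂, ρ J₁ = ρ J₂ → Φ J₁ = Φ J₂ → J₁ = J₂) (y : Fin ℓ → Fin m) :
    ((admWords A ℓ).filter (fun J => Φ J = y)).card ≤ m ^ p := by
  have hinj : Set.InjOn ρ ((admWords A ℓ).filter (fun J => Φ J = y)) := by
    intro J₁ h₁ J₂ h₂ heq
    have hy₁ : Φ J₁ = y := (Finset.mem_filter.mp h₁).2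
    have hy₂ : Φ J₂ = y := (Finset.mem_filter.mp h₂).2
    exact hdet J₁ J₂ heq (hy₁.trans hy₂.symm)
  calc ((admWords A ℓ).filter (fun J => Φ J = y)).card
      ≤ (Finset.univ : Finset (Fin p → Fin m)).card :=
        Finset.card_le_card_of_injOn _ (fun _ _ => Finset.mem_univ _) hinj
    _ = m ^ p := by simp

include hd hA01 hp hAp hδ hδK hbd hC ha0 ha1 hH in
/-- Lower comparison for the `JI` sum: modifying the last `p` letters. -/
lemma sSum_le_filter_append_right {n ℓ : ℕ} (hn : 1 ≤ n) (hpl : p < ℓ)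
    {I : Fin n → Fin m} (hI : Adm A I) :
    sSum A M q ℓ ≤ Gc d p δ K C a q * (m : ℝ) ^ p *
      ∑ J ∈ Finset.univ.filter (fun J : Fin ℓ → Fin m => Adm A (Fin.append J I)),
        sWord A M q J := by
  have hl : 1 ≤ ℓ := by omega
  have hpath : ∀ J : Fin ℓ → Fin m, ∃ u : ℕ → Fin m, u 0 = J ⟨ℓ - p - 1, by omega⟩ ∧
      u (p + 1) = I ⟨0, by omega⟩ ∧ ∀ t < p + 1, A (u t) (u (t + 1)) = 1 := fun J =>
    path_of_pow_pos hA01 (A_pow_succ_pos hA01 hp hAp _ _)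
  choose u hu0 hup hue using hpath
  set Φ : (Fin ℓ → Fin m) → (Fin ℓ → Fin m) :=
    fun J k => if (k : ℕ) < ℓ - p then J k else u J ((k : ℕ) - (ℓ - p) + 1) with hΦ
  have hkeep : ∀ J (k : Fin ℓ), (k : ℕ) < ℓ - p → Φ J k = J k := by
    intro J k hk
    simp only [hΦ, if_pos hk]
  have hΦadm : ∀ J : Fin ℓ → Fin m, Adm A J → Adm A (Φ J) := by
    intro J hJ t ht
    rcases Nat.lt_or_ge (t + 1) (ℓ - p) with h1 | h1
    · simp only [hΦ, if_pos (by omega : t < ℓ - p), if_pos h1]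
      exact hJ t ht
    · rcases Nat.lt_or_ge t (ℓ - p) with h2 | h2
      · have hteq : t + 1 = ℓ - p := by omega
        simp only [hΦ, if_pos h2, if_neg (by omega : ¬ (t + 1 < ℓ - p))]
        have e1 : (⟨t, by omega⟩ : Fin ℓ) = ⟨ℓ - p - 1, by omega⟩ := by
          apply Fin.ext; simp; omega
        have e2 : t + 1 - (ℓ - p) + 1 = 1 := by omega
        rw [e1, e2, ← hu0 J]
        exact hue J 0 (by omega)
      · simp only [hΦ, if_neg (by omega : ¬ (t < ℓ - p)), if_neg (by omega : ¬ (t + 1 < ℓ - p))]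
        have e3 : t + 1 - (ℓ - p) + 1 = (t - (ℓ - p) + 1) + 1 := by omega
        rw [e3]
        exact hue J (t - (ℓ - p) + 1) (by omega)
  have hΦapp : ∀ J : Fin ℓ → Fin m, Adm A J → Adm A (Fin.append (Φ J) I) := by
    intro J hJ
    refine Adm_append_of hl hn (hΦadm J hJ) hI ?_
    have e0 : Φ J ⟨ℓ - 1, by omega⟩ = u J p := by
      simp only [hΦ]
      rw [if_neg (show ¬ (((⟨ℓ - 1, by omega⟩ : Fin ℓ) : ℕ) < ℓ - p) by
        show ¬ (ℓ - 1 < ℓ - p); omega)]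
      congr 1
      show ℓ - 1 - (ℓ - p) + 1 = p
      omega
    rw [e0, ← hup J]
    exact hue J p (by omega)
  have hdet : ∀ J₁ J₂ : Fin ℓ → Fin m,
      (fun t : Fin p => J₁ ⟨ℓ - p + (t : ℕ), by omega⟩) =
        (fun t : Fin p => J₂ ⟨ℓ - p + (t : ℕ), by omega⟩) → Φ J₁ = Φ J₂ → J₁ = J₂ := by
    intro J₁ J₂ hsuf hΦeq
    funext k
    rcases Nat.lt_or_ge (k : ℕ) (ℓ - p) with h1 | h1
    · have h2 := congrFun hΦeq k
      rwa [hkeep J₁ k h1, hkeep J₂ k h1] at h2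
    · have h3 := congrFun hsuf ⟨(k : ℕ) - (ℓ - p), by omega⟩
      simp only at h3
      have e6 : (⟨ℓ - p + ((k : ℕ) - (ℓ - p)), by omega⟩ : Fin ℓ) = k := by
        apply Fin.ext; simp; omega
      rwa [e6] at h3
  have hGpos : 0 < Gc d p δ K C a q :=
    lt_of_lt_of_le one_pos (one_le_Gc hd hδ hδK hC ha0 ha1 q)
  have hterm : ∀ J ∈ admWords A ℓ, sWord A M q J ≤
      Gc d p δ K C a q * sWord A M q (Φ J) := by
    intro J hJmem
    have hJ : Adm A J := (Finset.mem_filter.mp hJmem).2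
    refine sWord_comp_of_norm_comp hd hA01 hp hAp hδ hδK hbd hC ha0 ha1 hH q hl hJ
      (hΦadm J hJ) ?_
    intro y hy y' hy'
    have hag : ∀ (k : ℕ) (h : k < ℓ), k < ℓ - p → J ⟨k, h⟩ = Φ J ⟨k, h⟩ := by
      intro k h hk
      exact (hkeep J ⟨k, h⟩ hk).symm
    have hag' : ∀ (k : ℕ) (h : k < ℓ), k < ℓ - p → Φ J ⟨k, h⟩ = J ⟨k, h⟩ := by
      intro k h hk
      exact hkeep J ⟨k, h⟩ hk
    exact ⟨norm_prefix_comp hd hp hδ hδK hbd hC ha0 ha1 hH hpl hag hy hy',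
      norm_prefix_comp hd hp hδ hδK hbd hC ha0 ha1 hH hpl hag' hy' hy⟩
  have hTpos : ∀ y ∈ Finset.univ.filter (fun J : Fin ℓ → Fin m => Adm A (Fin.append J I)),
      0 ≤ sWord A M q y := by
    intro y hy
    have hadm : Adm A (Fin.append y I) := (Finset.mem_filter.mp hy).2
    exact (sWord_pos hd hA01 hp hAp hδ hδK hbd hC ha0 ha1 hH q hl
      (Adm_append_left hadm)).le
  calc sSum A M q ℓ = ∑ J ∈ admWords A ℓ, sWord A M q J := rfl
    _ ≤ ∑ J ∈ admWords A ℓ, Gc d p δ K C a q * sWord A M q (Φ J) :=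
        Finset.sum_le_sum hterm
    _ = Gc d p δ K C a q * ∑ J ∈ admWords A ℓ, sWord A M q (Φ J) := by
        rw [Finset.mul_sum]
    _ ≤ Gc d p δ K C a q * ((m : ℝ) ^ p *
          ∑ y ∈ Finset.univ.filter (fun J : Fin ℓ → Fin m => Adm A (Fin.append J I)),
            sWord A M q y) := by
        refine mul_le_mul_of_nonneg_left ?_ hGpos.le
        refine sum_comp_le Φ _ _ ?_ ?_ hTpos
        · intro J hJmem
          have hJ : Adm A J := (Finset.mem_filter.mp hJmem).2
          exact Finset.mem_filter.mpr ⟨Finset.mem_univ _, hΦapp J hJ⟩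
        · exact fiber_card_le_gen Φ _ hdet
    _ = Gc d p δ K C a q * (m : ℝ) ^ p *
          ∑ J ∈ Finset.univ.filter (fun J : Fin ℓ → Fin m => Adm A (Fin.append J I)),
            sWord A M q J := by ring

end Main5

/-- Lemma 2.3(ii): `Σ_{J : IJ ∈ Σ_{A,n+ℓ}} s_{n+ℓ}(IJ,q) ≈ s_n(I,q) s_ℓ(q)`,
and likewise with `JI` in place of `IJ`. -/
theorem sWord_concat_sum_approx
    (m d : ℕ) (hm : 2 ≤ m) (hd : 1 ≤ d)
    (A : Matrix (Fin m) (Fin m) ℕ) (hA01 : ZeroOne A)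
    (p : ℕ) (hp : 1 ≤ p) (hAp : ∀ i j, 0 < (A ^ p) i j)
    (M : (ℕ → Fin m) → Matrix (Fin d) (Fin d) ℝ)
    (hpos : PosM A M) (hHolder : HolderM A M) (q : ℝ) :
    ∃ C : ℝ, 1 ≤ C ∧ ∀ n ℓ : ℕ, 1 ≤ n → p < ℓ → ∀ I : Fin n → Fin m, Adm A I →
      (C⁻¹ * (sWord A M q I * sSum A M q ℓ) ≤
          ∑ J ∈ Finset.univ.filter (fun J : Fin ℓ → Fin m => Adm A (Fin.append I J)),
            sWord A M q (Fin.append I J) ∧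
        ∑ J ∈ Finset.univ.filter (fun J : Fin ℓ → Fin m => Adm A (Fin.append I J)),
            sWord A M q (Fin.append I J) ≤ C * (sWord A M q I * sSum A M q ℓ)) ∧
      (C⁻¹ * (sWord A M q I * sSum A M q ℓ) ≤
          ∑ J ∈ Finset.univ.filter (fun J : Fin ℓ → Fin m => Adm A (Fin.append J I)),
            sWord A M q (Fin.append J I) ∧
        ∑ J ∈ Finset.univ.filter (fun J : Fin ℓ → Fin m => Adm A (Fin.append J I)),
            sWord A M q (Fin.append J I) ≤ C * (sWord A M q I * sSum A M q ℓ)) := by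
  classical
  obtain ⟨Ch, hCh, ah, ha0, ha1, hHol⟩ := hHolder
  have hd0 : 0 < d := hd
  have hm0 : 0 < m := by omega
  -- Σ_A is nonempty
  have hSne : (SigmaA A).Nonempty := by
    have hAdm1 : Adm A (fun _ : Fin 1 => (⟨0, hm0⟩ : Fin m)) := by
      intro i h
      omega
    obtain ⟨x, hx⟩ := cylinder_nonempty hA01 hp hAp le_rfl hAdm1
    exact ⟨x, hx.1⟩
  obtain ⟨δ, K, hδ, hδK, hbd⟩ :=
    exists_entry_bounds hd hm0 ⟨Ch, hCh, ah, ha0, ha1, hHol⟩ hpos hSne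
  -- constants
  set F := Fc d δ K Ch ah q with hF
  set G := Gc d p δ K Ch ah q with hG
  set mp := (m : ℝ) ^ p with hmp
  have hF1 : 1 ≤ F := one_le_Fc hd0 hδ hδK hCh ha0 ha1 q
  have hG1 : 1 ≤ G := one_le_Gc hd0 hδ hδK hCh ha0 ha1 q
  have hmp1 : 1 ≤ mp := by
    have h1 : (1 : ℝ) ≤ (m : ℝ) := by exact_mod_cast hm0
    calc (1 : ℝ) = 1 ^ p := (one_pow p).symm
      _ ≤ (m : ℝ) ^ p := pow_le_pow_left₀ zero_le_one h1 p
  have hFpos : 0 < F := lt_of_lt_of_le one_pos hF1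
  have hGpos : 0 < G := lt_of_lt_of_le one_pos hG1
  have hmppos : 0 < mp := lt_of_lt_of_le one_pos hmp1
  refine ⟨F * (G * mp), ?_, ?_⟩
  · have hGmp : 1 ≤ G * mp := by nlinarith
    calc (1 : ℝ) ≤ F := hF1
      _ ≤ F * (G * mp) := le_mul_of_one_le_right (by positivity) hGmp
  intro n ℓ hn hpl I hI
  have hl : 1 ≤ ℓ := by omega
  have hsI : 0 < sWord A M q I :=
    sWord_pos hd0 hA01 hp hAp hδ hδK hbd hCh ha0 ha1 hHol q hn hI
  have hCfpos : 0 < F * (G * mp) := by positivity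
  -- generic: handle both sides
  have hsubset1 : Finset.univ.filter (fun J : Fin ℓ → Fin m => Adm A (Fin.append I J)) ⊆
      admWords A ℓ := by
    intro J hJ
    exact Finset.mem_filter.mpr ⟨Finset.mem_univ _, Adm_append_right (Finset.mem_filter.mp hJ).2⟩
  have hsubset2 : Finset.univ.filter (fun J : Fin ℓ → Fin m => Adm A (Fin.append J I)) ⊆
      admWords A ℓ := by
    intro J hJ
    exact Finset.mem_filter.mpr ⟨Finset.mem_univ _, Adm_append_left (Finset.mem_filter.mp hJ).2⟩
  have hsWpos : ∀ J ∈ admWords A ℓ, 0 ≤ sWord A M q J := by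
    intro J hJ
    exact (sWord_pos hd0 hA01 hp hAp hδ hδK hbd hCh ha0 ha1 hHol q hl
      (Finset.mem_filter.mp hJ).2).le
  have hsumT1_le : ∑ J ∈ Finset.univ.filter (fun J : Fin ℓ → Fin m => Adm A (Fin.append I J)),
      sWord A M q J ≤ sSum A M q ℓ :=
    Finset.sum_le_sum_of_subset_of_nonneg hsubset1 fun J hJ _ => hsWpos J hJ
  have hsumT2_le : ∑ J ∈ Finset.univ.filter (fun J : Fin ℓ → Fin m => Adm A (Fin.append J I)),
      sWord A M q J ≤ sSum A M q ℓ :=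
    Finset.sum_le_sum_of_subset_of_nonneg hsubset2 fun J hJ _ => hsWpos J hJ
  constructor
  · -- IJ case
    set T := Finset.univ.filter (fun J : Fin ℓ → Fin m => Adm A (Fin.append I J)) with hT
    have hcomp : ∀ J ∈ T, sWord A M q (Fin.append I J) ≤
          F * (sWord A M q I * sWord A M q J) ∧
        sWord A M q I * sWord A M q J ≤ F * sWord A M q (Fin.append I J) := fun J hJ =>
      sWord_append_comp hd0 hA01 hp hAp hδ hδK hbd hCh ha0 ha1 hHol q hn hl
        (Finset.mem_filter.mp hJ).2
    constructor
    · -- lower bound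
      have hsum2 : sSum A M q ℓ ≤ G * mp * ∑ J ∈ T, sWord A M q J :=
        sSum_le_filter_append_left hd0 hA01 hp hAp hδ hδK hbd hCh ha0 ha1 hHol q hn hpl hI
      have hsum1 : sWord A M q I * ∑ J ∈ T, sWord A M q J ≤
          F * ∑ J ∈ T, sWord A M q (Fin.append I J) := by
        rw [Finset.mul_sum, Finset.mul_sum]
        exact Finset.sum_le_sum fun J hJ => (hcomp J hJ).2
      have hstep : (F * (G * mp))⁻¹ * (sWord A M q I * sSum A M q ℓ) ≤
          (F * (G * mp))⁻¹ * (G * mp * (sWord A M q I * ∑ J ∈ T, sWord A M q J)) := by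
        refine mul_le_mul_of_nonneg_left ?_ (by positivity)
        calc sWord A M q I * sSum A M q ℓ
            ≤ sWord A M q I * (G * mp * ∑ J ∈ T, sWord A M q J) :=
              mul_le_mul_of_nonneg_left hsum2 hsI.le
          _ = G * mp * (sWord A M q I * ∑ J ∈ T, sWord A M q J) := by ring
      refine hstep.trans ?_
      calc (F * (G * mp))⁻¹ * (G * mp * (sWord A M q I * ∑ J ∈ T, sWord A M q J))
          ≤ (F * (G * mp))⁻¹ * (G * mp * (F * ∑ J ∈ T, sWord A M q (Fin.append I J))) := by
            refine mul_le_mul_of_nonneg_left (mul_le_mul_of_nonneg_left hsum1 ?_) ?_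
              <;> positivity
        _ = ∑ J ∈ T, sWord A M q (Fin.append I J) := by
            field_simp
    · -- upper bound
      calc ∑ J ∈ T, sWord A M q (Fin.append I J)
          ≤ ∑ J ∈ T, F * (sWord A M q I * sWord A M q J) :=
            Finset.sum_le_sum fun J hJ => (hcomp J hJ).1
        _ = F * sWord A M q I * ∑ J ∈ T, sWord A M q J := by
            rw [Finset.mul_sum]
            exact Finset.sum_congr rfl fun J _ => by ring
        _ ≤ F * sWord A M q I * sSum A M q ℓ := by
            refine mul_le_mul_of_nonneg_left hsumT1_le ?_
            positivity
        _ ≤ F * (G * mp) * (sWord A M q I * sSum A M q ℓ) := by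
            have hsL : 0 ≤ sSum A M q ℓ := by
              have := hsumT1_le
              have h0 : 0 ≤ ∑ J ∈ T, sWord A M q J :=
                Finset.sum_nonneg fun J hJ => hsWpos J (hsubset1 hJ)
              linarith
            have hGmp : 1 ≤ G * mp := by nlinarith
            nlinarith [mul_nonneg (mul_nonneg hFpos.le hsI.le) hsL]
  · -- JI case
    set T := Finset.univ.filter (fun J : Fin ℓ → Fin m => Adm A (Fin.append J I)) with hT
    have hcomp : ∀ J ∈ T, sWord A M q (Fin.append J I) ≤
          F * (sWord A M q J * sWord A M q I) ∧
        sWord A M q J * sWord A M q I ≤ F * sWord A M q (Fin.append J I) := fun J hJ =>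
      sWord_append_comp hd0 hA01 hp hAp hδ hδK hbd hCh ha0 ha1 hHol q hl hn
        (Finset.mem_filter.mp hJ).2
    constructor
    · have hsum2 : sSum A M q ℓ ≤ G * mp * ∑ J ∈ T, sWord A M q J :=
        sSum_le_filter_append_right hd0 hA01 hp hAp hδ hδK hbd hCh ha0 ha1 hHol q hn hpl hI
      have hsum1 : sWord A M q I * ∑ J ∈ T, sWord A M q J ≤
          F * ∑ J ∈ T, sWord A M q (Fin.append J I) := by
        rw [Finset.mul_sum, Finset.mul_sum]
        refine Finset.sum_le_sum fun J hJ => ?_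
        have := (hcomp J hJ).2
        calc sWord A M q I * sWord A M q J = sWord A M q J * sWord A M q I := by ring
          _ ≤ F * sWord A M q (Fin.append J I) := this
      have hstep : (F * (G * mp))⁻¹ * (sWord A M q I * sSum A M q ℓ) ≤
          (F * (G * mp))⁻¹ * (G * mp * (sWord A M q I * ∑ J ∈ T, sWord A M q J)) := by
        refine mul_le_mul_of_nonneg_left ?_ (by positivity)
        calc sWord A M q I * sSum A M q ℓ
            ≤ sWord A M q I * (G * mp * ∑ J ∈ T, sWord A M q J) :=
              mul_le_mul_of_nonneg_left hsum2 hsI.le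
          _ = G * mp * (sWord A M q I * ∑ J ∈ T, sWord A M q J) := by ring
      refine hstep.trans ?_
      calc (F * (G * mp))⁻¹ * (G * mp * (sWord A M q I * ∑ J ∈ T, sWord A M q J))
          ≤ (F * (G * mp))⁻¹ * (G * mp * (F * ∑ J ∈ T, sWord A M q (Fin.append J I))) := by
            refine mul_le_mul_of_nonneg_left (mul_le_mul_of_nonneg_left hsum1 ?_) ?_
              <;> positivity
        _ = ∑ J ∈ T, sWord A M q (Fin.append J I) := by
            field_simp
    · calc ∑ J ∈ T, sWord A M q (Fin.append J I)
          ≤ ∑ J ∈ T, F * (sWord A M q J * sWord A M q I) :=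
            Finset.sum_le_sum fun J hJ => (hcomp J hJ).1
        _ = F * sWord A M q I * ∑ J ∈ T, sWord A M q J := by
            rw [Finset.mul_sum]
            exact Finset.sum_congr rfl fun J _ => by ring
        _ ≤ F * sWord A M q I * sSum A M q ℓ := by
            refine mul_le_mul_of_nonneg_left hsumT2_le ?_
            positivity
        _ ≤ F * (G * mp) * (sWord A M q I * sSum A M q ℓ) := by
            have hsL : 0 ≤ sSum A M q ℓ := by
              have h0 : 0 ≤ ∑ J ∈ T, sWord A M q J :=
                Finset.sum_nonneg fun J hJ => hsWpos J (hsubset2 hJ)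
              linarith
            have hGmp : 1 ≤ G * mp := by nlinarith
            nlinarith [mul_nonneg (mul_nonneg hFpos.le hsI.le) hsL]
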